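/- arXiv:2302.06506 — 10 statements merged into one kernel-verified Lean document; each statement's English description precedes it below -/
import Mathlib

section
/- Let Σ be a finite alphabet, let L ⊆ Σ*, and let W ⊆ Σ* be a locally bounded set such that L ∪ {ε} ⊆ W ⊆ Pref(L). Then the following are equivalent: (1) L is recognized by a W-GNFA; (2) the Myhill-Nerode equivalence ≡_{L,W} has finite index; (3) there exists a right-invariant equivalence relation ∼ on W of finite index such that L is a union of ∼-classes; (4) L is recognized by a W-GDFA. -/
/-!
Common framework: generalized automata (GNFAs/GDFAs) over a finite alphabet `A`,
following the paper "A Myhill-Nerode theorem for generalized automata".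
Strings over `A` are modeled as `List A`.
-/

/-- A path of edges (from `E`) from a state to a state whose concatenated labels
form the given string. -/
inductive EdgePath {A Q : Type} (E : Set (Q × Q × List A)) : Q → List A → Q → Prop
  | refl (u : Q) : EdgePath E u [] u
  | step {u v w : Q} {ρ α : List A} :
      (u, v, ρ) ∈ E → EdgePath E v α w → EdgePath E u (ρ ++ α) w

/-- A generalized nondeterministic finite automaton (GNFA) over alphabet `A`
with a finite state type `Q`: a finite set of string-labeled edges, an initial state,
a set of final states; every state is reachable from the initial state and
co-reachable (final, or a path leads from it to a final state). -/
structure GNFA (A Q : Type) where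
  E : Set (Q × Q × List A)
  init : Q
  final : Set Q
  finQ : Finite Q
  finE : E.Finite
  reach : ∀ u : Q, ∃ α : List A, EdgePath E init α u
  coreach : ∀ u : Q, ∃ (α : List A) (v : Q), v ∈ final ∧ EdgePath E u α v

namespace GNFA

variable {A Q : Type}

/-- `I_α`: the set of states reached from the initial state by reading `α`. -/
def Iword (M : GNFA A Q) (α : List A) : Set Q := {u | EdgePath M.E M.init α u}

/-- `I_u`: the set of strings that can be read from the initial state to `u`. -/
def Istate (M : GNFA A Q) (u : Q) : Set (List A) := {α | EdgePath M.E M.init α u}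

/-- The language recognized by the automaton. -/
def Lang (M : GNFA A Q) : Set (List A) := {α | ∃ u ∈ M.final, EdgePath M.E M.init α u}

/-- `W(A) = ⋃_{u ∈ Q} I_u`. -/
def WSet (M : GNFA A Q) : Set (List A) := {α | ∃ u : Q, EdgePath M.E M.init α u}

/-- A GNFA is a GDFA if: no edge is labeled with the empty string, distinct edges
leaving a state have distinct labels, and the labels of edges leaving a state form
a prefix-free set. -/
def IsGDFA (M : GNFA A Q) : Prop :=
  (∀ u v ρ, (u, v, ρ) ∈ M.E → ρ ≠ []) ∧
  (∀ u v v' ρ, (u, v, ρ) ∈ M.E → (u, v', ρ) ∈ M.E → v = v') ∧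
  (∀ u v v' ρ ρ', (u, v, ρ) ∈ M.E → (u, v', ρ') ∈ M.E → ρ <+: ρ' → ρ = ρ')

end GNFA

/-- Isomorphism of GNFAs: a bijection of states preserving the initial state,
final states and labeled edges. -/
def GNFA.Isomorphic {A Q₁ Q₂ : Type} (M : GNFA A Q₁) (N : GNFA A Q₂) : Prop :=
  ∃ φ : Q₁ ≃ Q₂, φ M.init = N.init ∧ (∀ u, u ∈ M.final ↔ φ u ∈ N.final) ∧
    ∀ u v ρ, (u, v, ρ) ∈ M.E ↔ (φ u, φ v, ρ) ∈ N.E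

section LangDefs
variable {A : Type}

/-- `Pref L`: the set of prefixes of strings of `L`. -/
def Pref (L : Set (List A)) : Set (List A) := {α | ∃ β ∈ L, α <+: β}

/-- Prefix-free kernel: the strings of `X` having no strict prefix in `X`. -/
def pfKernel (X : Set (List A)) : Set (List A) :=
  {α ∈ X | ∀ β, β <+: α → β ≠ α → β ∉ X}

/-- `T_α = {ρ ∈ Σ⁺ : αρ ∈ W}`. -/
def Tset (W : Set (List A)) (α : List A) : Set (List A) := {ρ | ρ ≠ [] ∧ α ++ ρ ∈ W}

/-- `W` is locally bounded if `K(T_α)` is finite for every `α ∈ W`. -/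
def LocallyBounded (W : Set (List A)) : Prop := ∀ α ∈ W, (pfKernel (Tset W α)).Finite

/-- `r` is an equivalence relation on `W`. -/
def IsEquivOn (W : Set (List A)) (r : List A → List A → Prop) : Prop :=
  (∀ α ∈ W, r α α) ∧
  (∀ α β, α ∈ W → β ∈ W → r α β → r β α) ∧
  (∀ α β γ, α ∈ W → β ∈ W → γ ∈ W → r α β → r β γ → r α γ)

/-- Right-invariance of an equivalence relation on `W`. -/
def RightInvariant (W : Set (List A)) (r : List A → List A → Prop) : Prop :=
  ∀ α ∈ W, ∀ β ∈ W, r α β → ∀ φ : List A,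
    (α ++ φ ∈ W ↔ β ++ φ ∈ W) ∧ (α ++ φ ∈ W → r (α ++ φ) (β ++ φ))

/-- The right-invariant refinement of `r` on `W`. -/
def riRef (W : Set (List A)) (r : List A → List A → Prop) :
    List A → List A → Prop := fun α β =>
  ∀ φ : List A, (α ++ φ ∈ W ↔ β ++ φ ∈ W) ∧ (α ++ φ ∈ W → r (α ++ φ) (β ++ φ))

/-- The Myhill–Nerode equivalence `≡_{L,W}`: the right-invariant refinement of
`α ∼_{L,W} β ⟺ (α ∈ L ⟺ β ∈ L)`. -/
def mnEquiv (L W : Set (List A)) : List A → List A → Prop :=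
  riRef W (fun α β => (α ∈ L ↔ β ∈ L))

/-- The `r`-class of `α` inside `W`. -/
def eqClass (W : Set (List A)) (r : List A → List A → Prop) (α : List A) :
    Set (List A) := {β ∈ W | r α β}

/-- `r` has finite index on `W`: the set of its classes is finite. -/
def FiniteIndex (W : Set (List A)) (r : List A → List A → Prop) : Prop :=
  {s : Set (List A) | ∃ α ∈ W, s = eqClass W r α}.Finite

/-- `L` is a union of `r`-classes (for `L ⊆ W`). -/
def UnionOfClasses (W : Set (List A)) (r : List A → List A → Prop)
    (L : Set (List A)) : Prop := ∀ α ∈ L, ∀ β ∈ W, r α β → β ∈ L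

end LangDefs

namespace GNFA
variable {A Q : Type}

/-- `α ∼_A β ⟺ I_α = I_β` (on `W(A)`). -/
def simA (M : GNFA A Q) : List A → List A → Prop := fun α β => M.Iword α = M.Iword β

/-- `≡_A`: the right-invariant refinement of `∼_A` on `W(A)`. -/
def equivA (M : GNFA A Q) : List A → List A → Prop := riRef M.WSet M.simA

end GNFA


/-! ### Auxiliary machinery for the proof -/

namespace MNAux

open List

variable {A Q : Type}

theorem edgePath_trans {E : Set (Q × Q × List A)} {s u v : Q} {α β : List A}
    (h1 : EdgePath E s α u) (h2 : EdgePath E u β v) : EdgePath E s (α ++ β) v := by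
  revert h2
  induction h1 with
  | refl w => exact id
  | step he _ ih =>
    intro h2
    rw [List.append_assoc]
    exact EdgePath.step he (ih h2)

theorem edgePath_split {E : Set (Q × Q × List A)} {s v : Q} {γ : List A}
    (h : EdgePath E s γ v) :
    ∀ α φ : List A, γ = α ++ φ →
      (∃ u, EdgePath E s α u ∧ EdgePath E u φ v) ∨
      (∃ (u w : Q) (β τ σ ψ : List A), σ ≠ [] ∧ α = β ++ τ ∧ φ = σ ++ ψ ∧
        EdgePath E s β u ∧ (u, w, τ ++ σ) ∈ E ∧ EdgePath E w ψ v) := by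
  induction h with
  | refl u =>
    intro α φ hsplit
    obtain ⟨rfl, rfl⟩ := List.append_eq_nil_iff.mp hsplit.symm
    exact Or.inl ⟨u, EdgePath.refl u, EdgePath.refl u⟩
  | @step u₀ v₀ w ρ δ he h ih =>
    intro α φ hsplit
    rcases List.append_eq_append_iff.mp hsplit.symm with ⟨t, hρ, hφ⟩ | ⟨t, hα, hδ⟩
    · rcases eq_or_ne t [] with rfl | ht
      · refine Or.inl ⟨v₀, ?_, ?_⟩
        · have hα' : α = ρ ++ [] := by simp [hρ]
          rw [hα']; exact EdgePath.step he (EdgePath.refl v₀)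
        · simpa [hφ] using h
      · refine Or.inr ⟨u₀, v₀, [], α, t, δ, ht, by simp, hφ, EdgePath.refl u₀, ?_, h⟩
        rw [← hρ]; exact he
    · rcases ih t φ hδ with ⟨u, p1, p2⟩ | ⟨u, w', β, τ, σ, ψ, hσ, hβτ, hφ', pβ, hE, pψ⟩
      · refine Or.inl ⟨u, ?_, p2⟩
        rw [hα]; exact EdgePath.step he p1
      · refine Or.inr ⟨u, w', ρ ++ β, τ, σ, ψ, hσ, ?_, hφ', EdgePath.step he pβ, hE, pψ⟩
        rw [hα, hβτ, List.append_assoc]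

/-- The "configuration" reached after reading `α`: completed states together with
mid-edge positions (target state, remaining suffix of label). -/
def Conf (M : GNFA A Q) (α : List A) : Set (Q × List A) :=
  {p | (p.2 = [] ∧ EdgePath M.E M.init α p.1) ∨
       (p.2 ≠ [] ∧ ∃ u τ β, α = β ++ τ ∧ EdgePath M.E M.init β u ∧ (u, p.1, τ ++ p.2) ∈ M.E)}

theorem conf_path_iff (M : GNFA A Q) (α φ : List A) (v : Q) :
    EdgePath M.E M.init (α ++ φ) v ↔
      ∃ w σ ψ, (w, σ) ∈ Conf M α ∧ φ = σ ++ ψ ∧ EdgePath M.E w ψ v := by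
  constructor
  · intro h
    rcases edgePath_split h α φ rfl with ⟨u, p1, p2⟩ |
      ⟨u, w, β, τ, σ, ψ, hσ, hβτ, hφ, pβ, hE, pψ⟩
    · exact ⟨u, [], φ, Or.inl ⟨rfl, p1⟩, rfl, p2⟩
    · exact ⟨w, σ, ψ, Or.inr ⟨hσ, u, τ, β, hβτ, pβ, hE⟩, hφ, pψ⟩
  · rintro ⟨w, σ, ψ, hconf, rfl, pψ⟩
    rcases hconf with ⟨hσ, pw⟩ | ⟨hσ, u, τ, β, hβτ, pβ, hE⟩
    · rcases hσ with rfl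
      simpa using edgePath_trans pw pψ
    · subst hβτ
      have : EdgePath M.E M.init (β ++ ((τ ++ σ) ++ ψ)) v :=
        edgePath_trans pβ (EdgePath.step hE pψ)
      simpa [List.append_assoc] using this

theorem conf_congr {M : GNFA A Q} {α β : List A} (h : Conf M α = Conf M β) (φ : List A) (v : Q) :
    EdgePath M.E M.init (α ++ φ) v ↔ EdgePath M.E M.init (β ++ φ) v := by
  rw [conf_path_iff, conf_path_iff, h]

theorem confSet_finite (M : GNFA A Q) : {S : Set (Q × List A) | ∃ α, S = Conf M α}.Finite := by
  haveI := M.finQ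
  have hD : ({σ : List A | σ = [] ∨ ∃ e ∈ M.E, σ <:+ e.2.2}).Finite := by
    have hsub : {σ : List A | σ = [] ∨ ∃ e ∈ M.E, σ <:+ e.2.2} ⊆
        insert [] (⋃ e ∈ M.E, {σ | σ ∈ e.2.2.tails}) := by
      rintro σ (rfl | ⟨e, he, hs⟩)
      · exact Set.mem_insert _ _
      · exact Set.mem_insert_of_mem _
          (Set.mem_biUnion he (by simpa [List.mem_tails] using hs))
    exact Set.Finite.subset
      ((M.finE.biUnion fun e _ => (e.2.2.tails).finite_toSet).insert []) hsub
  have hsub2 : {S : Set (Q × List A) | ∃ α, S = Conf M α} ⊆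
      {T | T ⊆ Set.univ ×ˢ {σ : List A | σ = [] ∨ ∃ e ∈ M.E, σ <:+ e.2.2}} := by
    rintro S ⟨α, rfl⟩
    rintro ⟨v, σ⟩ hm
    rcases hm with ⟨hσ, -⟩ | ⟨hσ, u, τ, β, -, -, hE⟩
    · exact ⟨trivial, Or.inl hσ⟩
    · exact ⟨trivial, Or.inr ⟨_, hE, List.suffix_append τ σ⟩⟩
  exact Set.Finite.subset ((Set.finite_univ.prod hD).finite_subsets) hsub2

/-! ### Properties of `mnEquiv` and `eqClass` -/

theorem mnEquiv_refl (L W : Set (List A)) (α : List A) : mnEquiv L W α α :=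
  fun _ => ⟨Iff.rfl, fun _ => Iff.rfl⟩

theorem mnEquiv_symm {L W : Set (List A)} {α β : List A} (h : mnEquiv L W α β) :
    mnEquiv L W β α :=
  fun φ => ⟨(h φ).1.symm, fun hb => ((h φ).2 ((h φ).1.mpr hb)).symm⟩

theorem mnEquiv_trans {L W : Set (List A)} {α β γ : List A} (h1 : mnEquiv L W α β)
    (h2 : mnEquiv L W β γ) : mnEquiv L W α γ :=
  fun φ => ⟨(h1 φ).1.trans (h2 φ).1,
    fun ha => ((h1 φ).2 ha).trans ((h2 φ).2 ((h1 φ).1.mp ha))⟩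

theorem mnEquiv_isEquivOn (L W : Set (List A)) : IsEquivOn W (mnEquiv L W) :=
  ⟨fun α _ => mnEquiv_refl L W α, fun _ _ _ _ h => mnEquiv_symm h,
    fun _ _ _ _ _ _ h1 h2 => mnEquiv_trans h1 h2⟩

theorem mnEquiv_rightInvariant (L W : Set (List A)) : RightInvariant W (mnEquiv L W) :=
  fun α _ β _ h φ => ⟨(h φ).1, fun _ ψ => by simpa [List.append_assoc] using h (φ ++ ψ)⟩

theorem mem_eqClass {W : Set (List A)} {r : List A → List A → Prop} {α γ : List A} :
    γ ∈ eqClass W r α ↔ γ ∈ W ∧ r α γ := Iff.rfl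

theorem eqClass_eq_of {W : Set (List A)} {r : List A → List A → Prop} (he : IsEquivOn W r)
    {α β : List A} (hα : α ∈ W) (hβ : β ∈ W) (h : r α β) : eqClass W r α = eqClass W r β := by
  ext γ
  rw [mem_eqClass, mem_eqClass]
  constructor
  · rintro ⟨hγ, hr⟩
    exact ⟨hγ, he.2.2 β α γ hβ hα hγ (he.2.1 α β hα hβ h) hr⟩
  · rintro ⟨hγ, hr⟩
    exact ⟨hγ, he.2.2 α β γ hα hβ hγ h hr⟩

theorem rel_of_eqClass_eq {W : Set (List A)} {r : List A → List A → Prop} (he : IsEquivOn W r)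
    {α β : List A} (hβ : β ∈ W) (h : eqClass W r α = eqClass W r β) : r α β := by
  have hm : β ∈ eqClass W r β := ⟨hβ, he.1 β hβ⟩
  rw [← h] at hm
  exact hm.2

/-! ### (1) → (2) -/

theorem step12 {Q : Type} (M : GNFA A Q) : FiniteIndex M.WSet (mnEquiv M.Lang M.WSet) := by
  classical
  have key : ∀ α β, Conf M α = Conf M β → mnEquiv M.Lang M.WSet α β := by
    intro α β h φ
    constructor
    · exact exists_congr fun v => conf_congr h φ v
    · intro _
      exact exists_congr fun v => and_congr_right fun _ => conf_congr h φ v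
  set mn := mnEquiv M.Lang M.WSet with hmn
  let f : Set (List A) → Set (Q × List A) := fun s =>
    if h : ∃ α, α ∈ M.WSet ∧ s = eqClass M.WSet mn α then Conf M h.choose else ∅
  apply Set.Finite.of_finite_image (f := f)
  · apply Set.Finite.subset ((confSet_finite M).insert ∅)
    rintro T ⟨s, hs, rfl⟩
    by_cases h : ∃ α, α ∈ M.WSet ∧ s = eqClass M.WSet mn α
    · simp only [f, dif_pos h]
      exact Set.mem_insert_of_mem _ ⟨h.choose, rfl⟩
    · simp only [f, dif_neg h]
      exact Set.mem_insert _ _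
  · rintro s ⟨α, hα, rfl⟩ s' ⟨α', hα', rfl⟩ hff
    have h1 : ∃ a, a ∈ M.WSet ∧ eqClass M.WSet mn α = eqClass M.WSet mn a := ⟨α, hα, rfl⟩
    have h2 : ∃ a, a ∈ M.WSet ∧ eqClass M.WSet mn α' = eqClass M.WSet mn a := ⟨α', hα', rfl⟩
    simp only [f, dif_pos h1, dif_pos h2] at hff
    have hrel : mn h1.choose h2.choose := key _ _ hff
    rw [h1.choose_spec.2, h2.choose_spec.2]
    exact eqClass_eq_of (mnEquiv_isEquivOn M.Lang M.WSet) h1.choose_spec.1 h2.choose_spec.1 hrel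

/-! ### The class construction for (3) → (4) -/

variable (W : Set (List A)) (r : List A → List A → Prop)

def ClsQ : Type := ↥{s : Set (List A) | ∃ α ∈ W, s = eqClass W r α}

def cls (α : List A) (hα : α ∈ W) : ClsQ W r := ⟨eqClass W r α, α, hα, rfl⟩

theorem ClsQ.exists_rep (q : ClsQ W r) : ∃ α, α ∈ W ∧ q.1 = eqClass W r α := q.2

noncomputable def rep (q : ClsQ W r) : List A := (ClsQ.exists_rep W r q).choose

theorem rep_mem (q : ClsQ W r) : rep W r q ∈ W := (ClsQ.exists_rep W r q).choose_spec.1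

theorem rep_spec (q : ClsQ W r) : q.1 = eqClass W r (rep W r q) :=
  (ClsQ.exists_rep W r q).choose_spec.2

def ClsE : Set (ClsQ W r × ClsQ W r × List A) :=
  {e | ∃ (α : List A) (hα : α ∈ W) (ρ : List A) (hρ : ρ ∈ pfKernel (Tset W α)),
        e = (cls W r α hα, cls W r (α ++ ρ) hρ.1.2, ρ)}

variable {W r}

theorem cls_eq_of (he : IsEquivOn W r) {α β : List A} (hα : α ∈ W) (hβ : β ∈ W)
    (h : r α β) : cls W r α hα = cls W r β hβ := Subtype.ext (eqClass_eq_of he hα hβ h)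

theorem rel_of_cls_eq (he : IsEquivOn W r) {α β : List A} (hα : α ∈ W) (hβ : β ∈ W)
    (h : cls W r α hα = cls W r β hβ) : r α β :=
  rel_of_eqClass_eq he hβ (congrArg Subtype.val h)

theorem rep_rel (he : IsEquivOn W r) {α : List A} (hα : α ∈ W) :
    r α (rep W r (cls W r α hα)) :=
  rel_of_eqClass_eq he (rep_mem W r _) (rep_spec W r (cls W r α hα))

theorem q_eq_cls_rep (q : ClsQ W r) : q = cls W r (rep W r q) (rep_mem W r q) :=
  Subtype.ext (rep_spec W r q)

theorem Tset_eq (hri : RightInvariant W r) {α β : List A} (hα : α ∈ W) (hβ : β ∈ W)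
    (h : r α β) : Tset W α = Tset W β := by
  ext ρ
  simp only [Tset, Set.mem_setOf_eq]
  exact and_congr_right fun _ => (hri α hα β hβ h ρ).1

theorem clsE_sound (he : IsEquivOn W r) (hri : RightInvariant W r) {u : ClsQ W r}
    {φ : List A} {q : ClsQ W r} (h : EdgePath (ClsE W r) u φ q) :
    ∀ β (hβ : β ∈ W), u = cls W r β hβ → ∃ hW : β ++ φ ∈ W, q = cls W r (β ++ φ) hW := by
  induction h with
  | refl w =>
    intro β hβ hu
    simp only [List.append_nil]
    exact ⟨hβ, hu⟩
  | @step u v w ρ δ he' tail ih =>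
    intro β hβ hu
    obtain ⟨γ, hγ, ρ', hρ', hpair⟩ := he'
    obtain ⟨hu', hv', hρeq⟩ : u = cls W r γ hγ ∧ v = cls W r (γ ++ ρ') hρ'.1.2 ∧ ρ = ρ' := by
      simpa [Prod.ext_iff] using hpair
    subst hρeq
    have hγρ : γ ++ ρ ∈ W := hρ'.1.2
    have hrγβ : r γ β := rel_of_cls_eq he hγ hβ (hu'.symm.trans hu)
    have hinv := hri γ hγ β hβ hrγβ ρ
    have hβρ : β ++ ρ ∈ W := hinv.1.mp hγρ
    have hv2 : v = cls W r (β ++ ρ) hβρ := hv'.trans (cls_eq_of he hγρ hβρ (hinv.2 hγρ))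
    obtain ⟨hW, hq⟩ := ih (β ++ ρ) hβρ hv2
    rw [← List.append_assoc]
    exact ⟨hW, hq⟩

theorem clsE_complete (he : IsEquivOn W r) :
    ∀ (n : ℕ) (φ : List A), φ.length ≤ n → ∀ (α : List A) (hα : α ∈ W) (hαφ : α ++ φ ∈ W),
      EdgePath (ClsE W r) (cls W r α hα) φ (cls W r (α ++ φ) hαφ) := by
  intro n
  induction n with
  | zero =>
    intro φ hφ α hα hαφ
    obtain rfl : φ = [] := List.length_eq_zero_iff.mp (Nat.le_zero.mp hφ)
    have hc : cls W r (α ++ []) hαφ = cls W r α hα :=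
      Subtype.ext (show eqClass W r (α ++ []) = eqClass W r α by rw [List.append_nil])
    rw [hc]
    exact EdgePath.refl _
  | succ n ih =>
    intro φ hφ α hα hαφ
    rcases eq_or_ne φ [] with rfl | hne
    · have hc : cls W r (α ++ []) hαφ = cls W r α hα :=
        Subtype.ext (show eqClass W r (α ++ []) = eqClass W r α by rw [List.append_nil])
      rw [hc]
      exact EdgePath.refl _
    · classical
      have hP : ∃ m, 0 < m ∧ m ≤ φ.length ∧ α ++ φ.take m ∈ W :=
        ⟨φ.length, List.length_pos_iff.mpr hne, le_refl _, by simpa [List.take_length] using hαφ⟩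
      set m := Nat.find hP with hm
      obtain ⟨hm0, hmle, hmW⟩ := Nat.find_spec hP
      set ρ := φ.take m with hρdef
      set ψ := φ.drop m with hψdef
      have hρψ : ρ ++ ψ = φ := List.take_append_drop m φ
      have hρlen : ρ.length = m := by
        rw [hρdef, List.length_take]
        exact min_eq_left hmle
      have hρne : ρ ≠ [] := by
        intro hc
        rw [hc] at hρlen
        simp at hρlen
        omega
      have hker : ρ ∈ pfKernel (Tset W α) := by
        refine ⟨⟨hρne, hmW⟩, ?_⟩
        intro σ hpre hne' hTσ
        obtain ⟨hσne, hσW⟩ := hTσ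
        have hlt : σ.length < m := by
          rcases lt_or_eq_of_le (hρlen ▸ hpre.length_le) with h | h
          · exact h
          · exfalso
            apply hne'
            rw [List.prefix_iff_eq_take.mp hpre, h, ← hρlen, List.take_length]
        have hσtake : σ = φ.take σ.length := by
          have h1 : σ = ρ.take σ.length := List.prefix_iff_eq_take.mp hpre
          rw [hρdef, List.take_take, min_eq_left hlt.le] at h1
          exact h1
        exact Nat.find_min hP hlt
          ⟨List.length_pos_iff.mpr hσne, le_trans hlt.le hmle, by rw [← hσtake]; exact hσW⟩
      have hαρ : α ++ ρ ∈ W := hmW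
      have hedge : (cls W r α hα, cls W r (α ++ ρ) hαρ, ρ) ∈ ClsE W r := ⟨α, hα, ρ, hker, rfl⟩
      have hW2 : (α ++ ρ) ++ ψ ∈ W := by rw [List.append_assoc, hρψ]; exact hαφ
      have hlenψ : ψ.length ≤ n := by
        rw [hψdef, List.length_drop]
        omega
      have tail := ih ψ hlenψ (α ++ ρ) hαρ hW2
      have heq2 : cls W r ((α ++ ρ) ++ ψ) hW2 = cls W r (α ++ φ) hαφ :=
        Subtype.ext (show eqClass W r ((α ++ ρ) ++ ψ) = eqClass W r (α ++ φ) by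
          rw [List.append_assoc, hρψ])
      rw [heq2] at tail
      have hstep := EdgePath.step hedge tail
      rwa [hρψ] at hstep

end MNAux

/-- **Myhill–Nerode theorem for generalized automata** (equivalences).
Let `L ⊆ Σ*` and let `W ⊆ Σ*` be a locally bounded set with `L ∪ {ε} ⊆ W ⊆ Pref(L)`.
TFAE: (1) `L` is recognized by a `W`-GNFA; (2) `≡_{L,W}` has finite index;
(3) there is a right-invariant equivalence relation on `W` of finite index of which
`L` is a union of classes; (4) `L` is recognized by a `W`-GDFA. -/
theorem myhill_nerode_generalized {A : Type} [Fintype A] (L W : Set (List A))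
    (hLB : LocallyBounded W) (hLsub : L ⊆ W) (hε : ([] : List A) ∈ W)
    (hWP : W ⊆ Pref L) :
    List.TFAE
      [∃ (Q : Type) (M : GNFA A Q), M.WSet = W ∧ M.Lang = L,
       FiniteIndex W (mnEquiv L W),
       ∃ r : List A → List A → Prop, IsEquivOn W r ∧ RightInvariant W r ∧
         FiniteIndex W r ∧ UnionOfClasses W r L,
       ∃ (Q : Type) (M : GNFA A Q), M.IsGDFA ∧ M.WSet = W ∧ M.Lang = L] := by
  tfae_have 1 → 2 := by
    rintro ⟨Q, M, rfl, rfl⟩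
    exact MNAux.step12 M
  tfae_have 2 → 3 := by
    intro h2
    refine ⟨mnEquiv L W, MNAux.mnEquiv_isEquivOn L W, MNAux.mnEquiv_rightInvariant L W, h2, ?_⟩
    intro α hαL β hβ h
    have h0 := (h []).2 (by simpa using hLsub hαL)
    simp only [List.append_nil] at h0
    exact h0.mp hαL
  tfae_have 3 → 4 := by
    rintro ⟨r, he, hri, hFI, hU⟩
    classical
    haveI hfin : Finite (MNAux.ClsQ W r) := hFI.to_subtype
    set f : MNAux.ClsQ W r → List A → MNAux.ClsQ W r := fun q ρ =>
      if h : MNAux.rep W r q ++ ρ ∈ W then MNAux.cls W r _ h else q with hf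
    have finE : (MNAux.ClsE W r).Finite := by
      have cover : MNAux.ClsE W r ⊆
          ⋃ q : MNAux.ClsQ W r,
            (fun ρ => (q, f q ρ, ρ)) '' pfKernel (Tset W (MNAux.rep W r q)) := by
        rintro e ⟨γ, hγ, ρ, hker, rfl⟩
        apply Set.mem_iUnion.mpr
        have hrel : r γ (MNAux.rep W r (MNAux.cls W r γ hγ)) := MNAux.rep_rel he hγ
        have hinv := hri γ hγ _ (MNAux.rep_mem W r (MNAux.cls W r γ hγ)) hrel ρ
        have hWrep : MNAux.rep W r (MNAux.cls W r γ hγ) ++ ρ ∈ W := hinv.1.mp hker.1.2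
        refine ⟨MNAux.cls W r γ hγ, ρ, ?_, ?_⟩
        · rw [← MNAux.Tset_eq hri hγ (MNAux.rep_mem W r (MNAux.cls W r γ hγ)) hrel]
          exact hker
        · have hcls : MNAux.cls W r (MNAux.rep W r (MNAux.cls W r γ hγ) ++ ρ) hWrep
              = MNAux.cls W r (γ ++ ρ) hker.1.2 :=
            (MNAux.cls_eq_of he hker.1.2 hWrep (hinv.2 hker.1.2)).symm
          simp only [hf, dif_pos hWrep, hcls]
      exact Set.Finite.subset
        (Set.finite_iUnion fun q => (hLB _ (MNAux.rep_mem W r q)).image _) cover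
    refine ⟨MNAux.ClsQ W r,
      { E := MNAux.ClsE W r
        init := MNAux.cls W r [] hε
        final := {q | MNAux.rep W r q ∈ L}
        finQ := hfin
        finE := finE
        reach := ?_
        coreach := ?_ }, ?_, ?_, ?_⟩
    · intro q
      refine ⟨MNAux.rep W r q, ?_⟩
      have hp := MNAux.clsE_complete he (MNAux.rep W r q).length (MNAux.rep W r q) le_rfl [] hε
        (show [] ++ MNAux.rep W r q ∈ W from MNAux.rep_mem W r q)
      nth_rewrite 2 [MNAux.q_eq_cls_rep q]
      simpa using hp
    · intro q
      obtain ⟨δ, hδL, hpre⟩ := hWP (MNAux.rep_mem W r q)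
      obtain ⟨φ, rfl⟩ := hpre
      have hδW : MNAux.rep W r q ++ φ ∈ W := hLsub hδL
      refine ⟨φ, MNAux.cls W r _ hδW, ?_, ?_⟩
      · exact hU _ hδL _ (MNAux.rep_mem W r _) (MNAux.rep_rel he hδW)
      · have hp := MNAux.clsE_complete he φ.length φ le_rfl (MNAux.rep W r q)
          (MNAux.rep_mem W r q) hδW
        nth_rewrite 1 [MNAux.q_eq_cls_rep q]
        exact hp
    · refine ⟨?_, ?_, ?_⟩
      · rintro u v ρ ⟨γ, hγ, ρ', hker, hpair⟩
        have : ρ = ρ' := congrArg (fun e => e.2.2) hpair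
        rw [this]
        exact hker.1.1
      · rintro u v v' ρ ⟨γ, hγ, ρ₁, hker₁, hp₁⟩ ⟨γ', hγ', ρ₂, hker₂, hp₂⟩
        obtain ⟨hu₁, hv₁, hρ₁⟩ : u = MNAux.cls W r γ hγ ∧ v = MNAux.cls W r (γ ++ ρ₁) hker₁.1.2
            ∧ ρ = ρ₁ := by simpa [Prod.ext_iff] using hp₁
        obtain ⟨hu₂, hv₂, hρ₂⟩ : u = MNAux.cls W r γ' hγ' ∧ v' = MNAux.cls W r (γ' ++ ρ₂) hker₂.1.2
            ∧ ρ = ρ₂ := by simpa [Prod.ext_iff] using hp₂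
        obtain rfl : ρ₁ = ρ₂ := hρ₁.symm.trans hρ₂
        have hrel : r γ γ' := MNAux.rel_of_cls_eq he hγ hγ' (hu₁.symm.trans hu₂)
        have hinv := hri γ hγ γ' hγ' hrel ρ₁
        rw [hv₁, hv₂]
        exact MNAux.cls_eq_of he hker₁.1.2 hker₂.1.2 (hinv.2 hker₁.1.2)
      · rintro u v v' ρ ρ' ⟨γ, hγ, ρ₁, hker₁, hp₁⟩ ⟨γ', hγ', ρ₂, hker₂, hp₂⟩ hpre
        obtain ⟨hu₁, hv₁, hρ₁⟩ : u = MNAux.cls W r γ hγ ∧ v = MNAux.cls W r (γ ++ ρ₁) hker₁.1.2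
            ∧ ρ = ρ₁ := by simpa [Prod.ext_iff] using hp₁
        obtain ⟨hu₂, hv₂, hρ₂⟩ : u = MNAux.cls W r γ' hγ' ∧ v' = MNAux.cls W r (γ' ++ ρ₂) hker₂.1.2
            ∧ ρ' = ρ₂ := by simpa [Prod.ext_iff] using hp₂
        have hrel : r γ γ' := MNAux.rel_of_cls_eq he hγ hγ' (hu₁.symm.trans hu₂)
        have hT : Tset W γ = Tset W γ' := MNAux.Tset_eq hri hγ hγ' hrel
        rw [hρ₁, hρ₂] at hpre ⊢
        by_contra hneq
        exact hker₂.2 ρ₁ hpre hneq (hT ▸ hker₁.1)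
    · ext α
      constructor
      · rintro ⟨q, hq⟩
        obtain ⟨hW', -⟩ := MNAux.clsE_sound he hri hq [] hε rfl
        simpa using hW'
      · intro hα
        exact ⟨MNAux.cls W r ([] ++ α) (show [] ++ α ∈ W from hα),
          MNAux.clsE_complete he α.length α le_rfl [] hε (show [] ++ α ∈ W from hα)⟩
    · ext α
      constructor
      · rintro ⟨q, hqfin, hq⟩
        obtain ⟨hW', hqeq⟩ := MNAux.clsE_sound he hri hq [] hε rfl
        subst hqeq
        have hrel : r ([] ++ α) (MNAux.rep W r (MNAux.cls W r ([] ++ α) hW')) :=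
          MNAux.rep_rel he hW'
        have hLmem : ([] ++ α) ∈ L :=
          hU _ hqfin _ hW' (he.2.1 _ _ hW' (MNAux.rep_mem W r _) hrel)
        simpa using hLmem
      · intro hαL
        have hαW : [] ++ α ∈ W := hLsub hαL
        refine ⟨MNAux.cls W r ([] ++ α) hαW, ?_,
          MNAux.clsE_complete he α.length α le_rfl [] hε hαW⟩
        exact hU _ (show ([] : List A) ++ α ∈ L from hαL) _ (MNAux.rep_mem W r _)
          (MNAux.rep_rel he hαW)
  tfae_have 4 → 1 := by
    rintro ⟨Q, M, -, hW, hL⟩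
    exact ⟨Q, M, hW, hL⟩
  tfae_finish
end

section
/- Let Σ be a finite alphabet, let L ⊆ Σ*, and let W ⊆ Σ* be a locally bounded set such that L ∪ {ε} ⊆ W ⊆ Pref(L). If L is recognized by some W-GDFA, then there exists a unique minimal W-GDFA recognizing L: any two W-GDFAs having the minimum number of states among all W-GDFAs recognizing L are isomorphic. -/
/-! ### Auxiliary lemmas for the proof -/

section AuxPath

variable {A Q : Type}

theorem EdgePath.append_path {E : Set (Q × Q × List A)} {u v w : Q} {α β : List A}
    (h1 : EdgePath E u α v) (h2 : EdgePath E v β w) : EdgePath E u (α ++ β) w := by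
  induction h1 with
  | refl => exact h2
  | step he _ ih => rw [List.append_assoc]; exact EdgePath.step he (ih h2)

theorem EdgePath.single {E : Set (Q × Q × List A)} {u v : Q} {ρ : List A}
    (h : (u, v, ρ) ∈ E) : EdgePath E u ρ v := by
  have := EdgePath.step h (EdgePath.refl (E := E) v)
  rwa [List.append_nil] at this

theorem EdgePath.cases_eq {E : Set (Q × Q × List A)} {u w : Q} {γ : List A}
    (h : EdgePath E u γ w) :
    (γ = [] ∧ u = w) ∨ ∃ x ρ γ', (u, x, ρ) ∈ E ∧ EdgePath E x γ' w ∧ γ = ρ ++ γ' := by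
  cases h with
  | refl => exact Or.inl ⟨rfl, rfl⟩
  | step he h' => exact Or.inr ⟨_, _, _, he, h', rfl⟩

namespace GNFA

variable {M : GNFA A Q}

theorem nil_of_path (hD : M.IsGDFA) {u v : Q} {γ : List A} (h : EdgePath M.E u γ v)
    (hγ : γ = []) : u = v := by
  rcases h.cases_eq with ⟨_, h2⟩ | ⟨x, ρ, γ', he, _, hc⟩
  · exact h2
  · subst hγ; exact absurd (List.append_eq_nil_iff.mp hc.symm).1 (hD.1 _ _ _ he)

theorem follow (hD : M.IsGDFA) {u v : Q} {α : List A} (h : EdgePath M.E u α v) :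
    ∀ {w : Q} {φ : List A}, EdgePath M.E u (α ++ φ) w → EdgePath M.E v φ w := by
  induction h with
  | refl => intro w φ h1; exact h1
  | @step u x v ρ α' he h' ih =>
    intro w φ h1
    rw [List.append_assoc] at h1
    rcases h1.cases_eq with ⟨hnil, _⟩ | ⟨y, σ, τ, he', hp', hc⟩
    · exact absurd (List.append_eq_nil_iff.mp hnil).1 (hD.1 _ _ _ he)
    · have hσρ : σ = ρ := by
        rcases List.prefix_or_prefix_of_prefix (⟨τ, hc.symm⟩ : σ <+: ρ ++ (α' ++ φ))
          (⟨α' ++ φ, rfl⟩ : ρ <+: ρ ++ (α' ++ φ)) with hpre | hpre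
        · exact hD.2.2 _ _ _ _ _ he' he hpre
        · exact (hD.2.2 _ _ _ _ _ he he' hpre).symm
      subst hσρ
      have hy : y = x := hD.2.1 _ _ _ _ he' he
      subst hy
      have hτ : τ = α' ++ φ := (List.append_cancel_left hc.symm)
      exact ih (hτ ▸ hp')

theorem path_unique (hD : M.IsGDFA) {u v w : Q} {α : List A}
    (h1 : EdgePath M.E u α v) (h2 : EdgePath M.E u α w) : v = w :=
  nil_of_path hD (follow hD h1 (by rw [List.append_nil]; exact h2)) rfl

theorem final_iff (hD : M.IsGDFA) {L : Set (List A)} (hL : M.Lang = L)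
    {α : List A} {u : Q} (hp : EdgePath M.E M.init α u) : u ∈ M.final ↔ α ∈ L := by
  constructor
  · intro hu; rw [← hL]; exact ⟨u, hu, hp⟩
  · intro hα
    rw [← hL] at hα
    obtain ⟨w, hw, hpw⟩ := hα
    rwa [path_unique hD hp hpw]

theorem edge_char (hD : M.IsGDFA) {W : Set (List A)} (hW : M.WSet = W)
    {α : List A} {u : Q} (hp : EdgePath M.E M.init α u) (v : Q) (ρ : List A) :
    (u, v, ρ) ∈ M.E ↔ ρ ∈ pfKernel (Tset W α) ∧ EdgePath M.E M.init (α ++ ρ) v := by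
  constructor
  · intro he
    have hρne : ρ ≠ [] := hD.1 _ _ _ he
    have hpath : EdgePath M.E M.init (α ++ ρ) v := hp.append_path (EdgePath.single he)
    refine ⟨⟨⟨hρne, ?_⟩, ?_⟩, hpath⟩
    · rw [← hW]; exact ⟨v, hpath⟩
    · intro β hβρ hβne hβT
      obtain ⟨hβne', hβW⟩ := hβT
      rw [← hW] at hβW
      obtain ⟨w, hw⟩ := hβW
      have hfol : EdgePath M.E u β w := follow hD hp hw
      rcases hfol.cases_eq with ⟨h1, _⟩ | ⟨y, σ, τ, he', hp', hc⟩
      · exact hβne' h1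
      · have hσβ : σ <+: β := ⟨τ, hc.symm⟩
        have hσρ : σ = ρ := hD.2.2 _ _ _ _ _ he' he (hσβ.trans hβρ)
        subst hσρ
        exact hβne (hβρ.eq_of_length (Nat.le_antisymm hβρ.length_le hσβ.length_le))
  · rintro ⟨⟨⟨hρne, hρW⟩, hker⟩, hpath⟩
    have hfol : EdgePath M.E u ρ v := follow hD hp hpath
    rcases hfol.cases_eq with ⟨h1, _⟩ | ⟨y, σ, τ, he', hp', hc⟩
    · exact absurd h1 hρne
    · have hσρ : σ = ρ := by
        by_contra hne
        refine hker σ ⟨τ, hc.symm⟩ hne ⟨hD.1 _ _ _ he', ?_⟩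
        rw [← hW]; exact ⟨y, hp.append_path (EdgePath.single he')⟩
      subst hσρ
      have hτ : τ = [] := by
        have h0 : σ ++ [] = σ ++ τ := by rw [List.append_nil]; exact hc
        exact (List.append_cancel_left h0).symm
      subst hτ
      have hy : y = v := nil_of_path hD hp' rfl
      subst hy
      exact he'

theorem mnEquiv_of_same_state (hD : M.IsGDFA) {L W : Set (List A)} (hW : M.WSet = W)
    (hL : M.Lang = L) {α β : List A} {u : Q} (hpα : EdgePath M.E M.init α u)
    (hpβ : EdgePath M.E M.init β u) : mnEquiv L W α β := by
  intro φ
  constructor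
  · rw [← hW]
    constructor
    · rintro ⟨w, hw⟩; exact ⟨w, hpβ.append_path (follow hD hpα hw)⟩
    · rintro ⟨w, hw⟩; exact ⟨w, hpα.append_path (follow hD hpβ hw)⟩
  · intro _
    rw [← hL]
    constructor
    · rintro ⟨w, hwf, hw⟩; exact ⟨w, hwf, hpβ.append_path (follow hD hpα hw)⟩
    · rintro ⟨w, hwf, hw⟩; exact ⟨w, hwf, hpα.append_path (follow hD hpβ hw)⟩

end GNFA

end AuxPath
section AuxCanonical

variable {A : Type} {L W : Set (List A)}

theorem mnEquiv_refl (L W : Set (List A)) (α : List A) : mnEquiv L W α α :=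
  fun _ => ⟨Iff.rfl, fun _ => Iff.rfl⟩

theorem mnEquiv_symm {α β : List A} (h : mnEquiv L W α β) : mnEquiv L W β α :=
  fun φ => ⟨(h φ).1.symm, fun hw => ((h φ).2 ((h φ).1.mpr hw)).symm⟩

theorem mnEquiv_trans {α β γ : List A} (h1 : mnEquiv L W α β) (h2 : mnEquiv L W β γ) :
    mnEquiv L W α γ :=
  fun φ => ⟨(h1 φ).1.trans (h2 φ).1,
    fun hw => ((h1 φ).2 hw).trans ((h2 φ).2 ((h1 φ).1.mp hw))⟩

theorem mnEquiv_append {α β : List A} (h : mnEquiv L W α β) (ρ : List A) :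
    mnEquiv L W (α ++ ρ) (β ++ ρ) := by
  intro φ
  have := h (ρ ++ φ)
  rwa [← List.append_assoc, ← List.append_assoc] at this

theorem mnEquiv_W_iff {α β : List A} (h : mnEquiv L W α β) : α ∈ W ↔ β ∈ W := by
  have := (h []).1; rwa [List.append_nil, List.append_nil] at this

theorem mnEquiv_L_iff {α β : List A} (h : mnEquiv L W α β) (hα : α ∈ W) :
    (α ∈ L ↔ β ∈ L) := by
  have := (h []).2
  rw [List.append_nil, List.append_nil] at this
  exact this hα

theorem mnEquiv_tset {α β : List A} (h : mnEquiv L W α β) : Tset W α = Tset W β := by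
  ext ρ
  simp only [Tset, Set.mem_setOf_eq]
  exact and_congr_right fun _ => (h ρ).1

/-- The Myhill–Nerode setoid on strings of `W`. -/
def mnSetoid (L W : Set (List A)) : Setoid {α : List A // α ∈ W} where
  r a b := mnEquiv L W a.1 b.1
  iseqv := ⟨fun a => mnEquiv_refl L W a.1, mnEquiv_symm, mnEquiv_trans⟩

/-- The set of Myhill–Nerode classes. -/
abbrev MNQuot (L W : Set (List A)) : Type := Quotient (mnSetoid L W)

/-- The class of a string of `W`. -/
def mnMk (L W : Set (List A)) (α : List A) (h : α ∈ W) : MNQuot L W :=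
  Quotient.mk (mnSetoid L W) ⟨α, h⟩

theorem mnMk_eq_iff {α β : List A} {h : α ∈ W} {h' : β ∈ W} :
    mnMk L W α h = mnMk L W β h' ↔ mnEquiv L W α β := by
  rw [mnMk, mnMk, Quotient.eq]
  rfl

theorem mnMk_eq_of_eq {α β : List A} (e : α = β) {h : α ∈ W} {h' : β ∈ W} :
    mnMk L W α h = mnMk L W β h' := by subst e; rfl

/-- Edges of the canonical automaton. -/
def canE (L W : Set (List A)) : Set (MNQuot L W × MNQuot L W × List A) :=
  {e | ∃ (α : List A) (h : α ∈ W) (ρ : List A) (hρ : ρ ∈ pfKernel (Tset W α)),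
    e = (mnMk L W α h, mnMk L W (α ++ ρ) hρ.1.2, ρ)}

theorem exists_kernel_prefix {α : List A} :
    ∀ (n : ℕ) (γ : List A), γ.length ≤ n → γ ∈ Tset W α →
      ∃ ρ ∈ pfKernel (Tset W α), ρ <+: γ := by
  intro n
  induction n with
  | zero =>
    intro γ hlen hT
    exact absurd (List.length_eq_zero_iff.mp (Nat.le_zero.mp hlen)) hT.1
  | succ n ih =>
    intro γ hlen hT
    by_cases hk : ∀ β, β <+: γ → β ≠ γ → β ∉ Tset W α
    · exact ⟨γ, ⟨hT, hk⟩, List.prefix_refl γ⟩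
    · push_neg at hk
      obtain ⟨β, hpre, hne, hβ⟩ := hk
      have hlt : β.length < γ.length :=
        lt_of_le_of_ne hpre.length_le fun e => hne (hpre.eq_of_length e)
      obtain ⟨ρ, hρ, hρβ⟩ := ih β (by omega) hβ
      exact ⟨ρ, hρ, hρβ.trans hpre⟩

theorem can_path1 :
    ∀ (n : ℕ) (γ : List A), γ.length ≤ n → ∀ (α : List A) (h : α ∈ W) (h2 : α ++ γ ∈ W),
      EdgePath (canE L W) (mnMk L W α h) γ (mnMk L W (α ++ γ) h2) := by
  intro n
  induction n with
  | zero =>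
    intro γ hlen α h h2
    obtain rfl : γ = [] := List.length_eq_zero_iff.mp (Nat.le_zero.mp hlen)
    rw [show mnMk L W (α ++ []) h2 = mnMk L W α h from mnMk_eq_of_eq (List.append_nil α)]
    exact EdgePath.refl _
  | succ n ih =>
    intro γ hlen α h h2
    rcases eq_or_ne γ [] with rfl | hγ
    · rw [show mnMk L W (α ++ []) h2 = mnMk L W α h from mnMk_eq_of_eq (List.append_nil α)]
      exact EdgePath.refl _
    · have hγT : γ ∈ Tset W α := ⟨hγ, h2⟩
      obtain ⟨ρ, hρK, hpre⟩ := exists_kernel_prefix γ.length γ le_rfl hγT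
      obtain ⟨γ', rfl⟩ := hpre
      have hαρ : α ++ ρ ∈ W := hρK.1.2
      have he : (mnMk L W α h, mnMk L W (α ++ ρ) hαρ, ρ) ∈ canE L W := ⟨α, h, ρ, hρK, rfl⟩
      have h2' : (α ++ ρ) ++ γ' ∈ W := by rwa [List.append_assoc]
      have hlen' : γ'.length ≤ n := by
        have h0 : 0 < ρ.length := List.length_pos_iff.mpr hρK.1.1
        rw [List.length_append] at hlen
        omega
      have hp' := ih γ' hlen' (α ++ ρ) hαρ h2'
      have hstep := EdgePath.step he hp'
      rwa [show mnMk L W (α ++ ρ ++ γ') h2' = mnMk L W (α ++ (ρ ++ γ')) h2 from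
        mnMk_eq_of_eq (List.append_assoc _ _ _)] at hstep

theorem can_path2 {q q' : MNQuot L W} {γ : List A}
    (hp : EdgePath (canE L W) q γ q') :
    ∀ (α : List A) (h : α ∈ W), q = mnMk L W α h →
      ∃ h2 : α ++ γ ∈ W, q' = mnMk L W (α ++ γ) h2 := by
  induction hp with
  | refl u =>
    intro α h hq
    exact ⟨by rw [List.append_nil]; exact h,
      hq.trans (mnMk_eq_of_eq (List.append_nil α).symm)⟩
  | @step u v w ρ γ' he hp' ih =>
    intro α h hq
    obtain ⟨β, hβ, ρ₀, hρ₀, heq⟩ := he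
    simp only [Prod.mk.injEq] at heq
    obtain ⟨hu, hv, hρ⟩ := heq
    subst hρ
    have hequiv : mnEquiv L W α β := mnMk_eq_iff.mp (hq.symm.trans hu)
    have hβρ : β ++ ρ ∈ W := hρ₀.1.2
    have hαρ : α ++ ρ ∈ W := (hequiv ρ).1.mpr hβρ
    have hv' : v = mnMk L W (α ++ ρ) hαρ :=
      hv.trans (mnMk_eq_iff.mpr (mnEquiv_append (mnEquiv_symm hequiv) ρ))
    obtain ⟨h2, hq'⟩ := ih (α ++ ρ) hαρ hv'
    refine ⟨by rw [← List.append_assoc]; exact h2,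
      hq'.trans (mnMk_eq_of_eq (List.append_assoc _ _ _))⟩

end AuxCanonical
section AuxGNFA

variable {A : Type} {L W : Set (List A)}

/-- Final states of the canonical automaton. -/
def canF (L W : Set (List A)) (hLsub : L ⊆ W) : Set (MNQuot L W) :=
  {q | ∃ (α : List A) (hl : α ∈ L), q = mnMk L W α (hLsub hl)}

theorem canF_mem (hLsub : L ⊆ W) {α : List A} (h : α ∈ W) :
    mnMk L W α h ∈ canF L W hLsub ↔ α ∈ L := by
  constructor
  · rintro ⟨β, hβ, hq⟩
    exact (mnEquiv_L_iff (mnMk_eq_iff.mp hq) h).mpr hβ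
  · intro hα
    exact ⟨α, hα, rfl⟩

theorem canE_finite (hLB : LocallyBounded W) (hfin : Finite (MNQuot L W)) :
    (canE L W).Finite := by
  have hsub : canE L W ⊆ ⋃ (q : MNQuot L W), ⋃ (q' : MNQuot L W),
      {q} ×ˢ ({q'} ×ˢ pfKernel (Tset W q.out.1)) := by
    rintro e ⟨α, h, ρ, hρ, rfl⟩
    refine Set.mem_iUnion.mpr ⟨mnMk L W α h, Set.mem_iUnion.mpr ⟨mnMk L W (α ++ ρ) hρ.1.2, ?_⟩⟩
    refine ⟨rfl, rfl, ?_⟩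
    have hout : mnEquiv L W (mnMk L W α h).out.1 α := by
      have := Quotient.out_eq (mnMk L W α h)
      exact mnMk_eq_iff.mp ((congrArg id this).trans rfl : mnMk L W _ (mnMk L W α h).out.2 = mnMk L W α h)
    rw [mnEquiv_tset hout]
    exact hρ
  refine Set.Finite.subset (Set.finite_iUnion fun q => Set.finite_iUnion fun q' => ?_) hsub
  exact (Set.finite_singleton q).prod ((Set.finite_singleton q').prod (hLB _ q.out.2))

/-- The canonical (minimal) `W`-GDFA for `L`. -/
def canGNFA (L W : Set (List A)) (hLB : LocallyBounded W) (hLsub : L ⊆ W)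
    (hε : ([] : List A) ∈ W) (hWP : W ⊆ Pref L) (hfin : Finite (MNQuot L W)) :
    GNFA A (MNQuot L W) where
  E := canE L W
  init := mnMk L W [] hε
  final := canF L W hLsub
  finQ := hfin
  finE := canE_finite hLB hfin
  reach := by
    intro q
    obtain ⟨⟨α, hα⟩, rfl⟩ := Quotient.exists_rep q
    exact ⟨α, can_path1 α.length α le_rfl [] hε hα⟩
  coreach := by
    intro q
    obtain ⟨⟨α, hα⟩, rfl⟩ := Quotient.exists_rep q
    obtain ⟨β, hβL, γ, rfl⟩ := hWP hα
    refine ⟨γ, mnMk L W (α ++ γ) (hLsub hβL), (canF_mem hLsub _).mpr hβL, ?_⟩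
    exact can_path1 γ.length γ le_rfl α hα (hLsub hβL)

theorem canGNFA_isGDFA (hLB : LocallyBounded W) (hLsub : L ⊆ W)
    (hε : ([] : List A) ∈ W) (hWP : W ⊆ Pref L) (hfin : Finite (MNQuot L W)) :
    (canGNFA L W hLB hLsub hε hWP hfin).IsGDFA := by
  refine ⟨?_, ?_, ?_⟩
  · rintro u v ρ ⟨α, h, ρ₀, hρ₀, heq⟩
    simp only [Prod.mk.injEq] at heq
    obtain ⟨_, _, rfl⟩ := heq
    exact hρ₀.1.1
  · rintro u v v' ρ ⟨α, h, ρ₀, hρ₀, heq⟩ ⟨β, hβ, ρ₁, hρ₁, heq'⟩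
    simp only [Prod.mk.injEq] at heq heq'
    obtain ⟨hu, hv, rfl⟩ := heq
    obtain ⟨hu', hv', rfl⟩ := heq'
    have hequiv : mnEquiv L W α β := mnMk_eq_iff.mp (hu.symm.trans hu')
    rw [hv, hv']
    exact mnMk_eq_iff.mpr (mnEquiv_append hequiv ρ)
  · rintro u v v' ρ ρ' ⟨α, h, ρ₀, hρ₀, heq⟩ ⟨β, hβ, ρ₁, hρ₁, heq'⟩ hpre
    simp only [Prod.mk.injEq] at heq heq'
    obtain ⟨hu, hv, rfl⟩ := heq
    obtain ⟨hu', hv', rfl⟩ := heq'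
    have hequiv : mnEquiv L W α β := mnMk_eq_iff.mp (hu.symm.trans hu')
    by_contra hne
    have hρT : ρ ∈ Tset W β := by
      rw [← mnEquiv_tset hequiv]
      exact hρ₀.1
    exact hρ₁.2 ρ hpre hne hρT

theorem canGNFA_WSet (hLB : LocallyBounded W) (hLsub : L ⊆ W)
    (hε : ([] : List A) ∈ W) (hWP : W ⊆ Pref L) (hfin : Finite (MNQuot L W)) :
    (canGNFA L W hLB hLsub hε hWP hfin).WSet = W := by
  ext γ
  constructor
  · rintro ⟨q, hq⟩
    obtain ⟨h2, _⟩ := can_path2 hq [] hε rfl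
    rwa [List.nil_append] at h2
  · intro hγ
    have h2 : ([] : List A) ++ γ ∈ W := by rwa [List.nil_append]
    exact ⟨mnMk L W ([] ++ γ) h2, can_path1 γ.length γ le_rfl [] hε h2⟩

theorem canGNFA_Lang (hLB : LocallyBounded W) (hLsub : L ⊆ W)
    (hε : ([] : List A) ∈ W) (hWP : W ⊆ Pref L) (hfin : Finite (MNQuot L W)) :
    (canGNFA L W hLB hLsub hε hWP hfin).Lang = L := by
  ext γ
  constructor
  · rintro ⟨q, hqf, hq⟩
    obtain ⟨h2, rfl⟩ := can_path2 hq [] hε rfl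
    have h2' : γ ∈ W := by rwa [List.nil_append] at h2
    have : mnMk L W ([] ++ γ) h2 = mnMk L W γ h2' := mnMk_eq_of_eq (List.nil_append γ)
    rw [this] at hqf
    exact (canF_mem hLsub h2').mp hqf
  · intro hγ
    have h2 : ([] : List A) ++ γ ∈ W := by rw [List.nil_append]; exact hLsub hγ
    refine ⟨mnMk L W ([] ++ γ) h2, ?_, can_path1 γ.length γ le_rfl [] hε h2⟩
    rw [show mnMk L W ([] ++ γ) h2 = mnMk L W γ (hLsub hγ) from mnMk_eq_of_eq (List.nil_append γ)]
    exact (canF_mem hLsub _).mpr hγ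

theorem quot_surj {Q : Type} {M : GNFA A Q} (hD : M.IsGDFA)
    (hW : M.WSet = W) (hL : M.Lang = L) :
    ∃ f : Q → MNQuot L W, Function.Surjective f ∧
      ∀ (α : List A) (h : α ∈ W) (u : Q), EdgePath M.E M.init α u → f u = mnMk L W α h := by
  have hrep : ∀ u : Q, ∃ α, α ∈ W ∧ EdgePath M.E M.init α u := fun u => by
    obtain ⟨α, hα⟩ := M.reach u
    have : α ∈ M.WSet := ⟨u, hα⟩
    rw [hW] at this
    exact ⟨α, this, hα⟩
  choose rep hrepW hrepP using hrep
  refine ⟨fun u => mnMk L W (rep u) (hrepW u), ?_, ?_⟩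
  · intro q
    obtain ⟨⟨α, hα⟩, rfl⟩ := Quotient.exists_rep q
    have : α ∈ M.WSet := by rw [hW]; exact hα
    obtain ⟨u, hu⟩ := this
    exact ⟨u, mnMk_eq_iff.mpr (M.mnEquiv_of_same_state hD hW hL (hrepP u) hu)⟩
  · intro α h u hp
    exact mnMk_eq_iff.mpr (M.mnEquiv_of_same_state hD hW hL (hrepP u) hp)

end AuxGNFA
/-- **Uniqueness of the minimal `W`-GDFA**: two `W`-GDFAs recognizing `L` having the
minimum number of states among all `W`-GDFAs recognizing `L` are isomorphic. -/
theorem minimal_WGDFA_unique {A : Type} [Fintype A] (L W : Set (List A))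
    (hLB : LocallyBounded W) (hLsub : L ⊆ W) (hε : ([] : List A) ∈ W)
    (hWP : W ⊆ Pref L) {Q₁ Q₂ : Type} (M₁ : GNFA A Q₁) (M₂ : GNFA A Q₂)
    (hD₁ : M₁.IsGDFA) (hW₁ : M₁.WSet = W) (hL₁ : M₁.Lang = L)
    (hD₂ : M₂.IsGDFA) (hW₂ : M₂.WSet = W) (hL₂ : M₂.Lang = L)
    (hmin₁ : ∀ (Q' : Type) (N : GNFA A Q'), N.IsGDFA → N.WSet = W → N.Lang = L →
      Nat.card Q₁ ≤ Nat.card Q')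
    (hmin₂ : ∀ (Q' : Type) (N : GNFA A Q'), N.IsGDFA → N.WSet = W → N.Lang = L →
      Nat.card Q₂ ≤ Nat.card Q') :
    M₁.Isomorphic M₂ := by
  classical
  haveI : Finite Q₁ := M₁.finQ
  haveI : Finite Q₂ := M₂.finQ
  obtain ⟨f₁, hf₁s, hf₁⟩ := quot_surj hD₁ hW₁ hL₁
  obtain ⟨f₂, hf₂s, hf₂⟩ := quot_surj hD₂ hW₂ hL₂
  haveI hfin : Finite (MNQuot L W) := Finite.of_surjective f₁ hf₁s
  have hb₁ : Function.Bijective f₁ := hf₁s.bijective_of_nat_card_le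
    (hmin₁ _ (canGNFA L W hLB hLsub hε hWP hfin) (canGNFA_isGDFA hLB hLsub hε hWP hfin)
      (canGNFA_WSet hLB hLsub hε hWP hfin) (canGNFA_Lang hLB hLsub hε hWP hfin))
  have hb₂ : Function.Bijective f₂ := hf₂s.bijective_of_nat_card_le
    (hmin₂ _ (canGNFA L W hLB hLsub hε hWP hfin) (canGNFA_isGDFA hLB hLsub hε hWP hfin)
      (canGNFA_WSet hLB hLsub hε hWP hfin) (canGNFA_Lang hLB hLsub hε hWP hfin))
  let e₁ : Q₁ ≃ MNQuot L W := Equiv.ofBijective f₁ hb₁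
  let e₂ : Q₂ ≃ MNQuot L W := Equiv.ofBijective f₂ hb₂
  let φ : Q₁ ≃ Q₂ := e₁.trans e₂.symm
  have key : ∀ {α : List A} {u : Q₁} {v : Q₂} (_ : α ∈ W),
      EdgePath M₁.E M₁.init α u → EdgePath M₂.E M₂.init α v → φ u = v := by
    intro α u v h p1 p2
    apply e₂.injective
    show e₂ (e₂.symm (e₁ u)) = e₂ v
    rw [Equiv.apply_symm_apply]
    show f₁ u = f₂ v
    rw [hf₁ α h u p1, hf₂ α h v p2]
  refine ⟨φ, ?_, ?_, ?_⟩
  · exact key hε (EdgePath.refl _) (EdgePath.refl _)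
  · intro u
    obtain ⟨α, p1⟩ := M₁.reach u
    have hαW : α ∈ W := by
      have : α ∈ M₁.WSet := ⟨u, p1⟩
      rwa [hW₁] at this
    have : α ∈ M₂.WSet := by rw [hW₂]; exact hαW
    obtain ⟨v, p2⟩ := this
    rw [key hαW p1 p2, M₁.final_iff hD₁ hL₁ p1, M₂.final_iff hD₂ hL₂ p2]
  · intro u v ρ
    obtain ⟨α, p1⟩ := M₁.reach u
    have hαW : α ∈ W := by
      have : α ∈ M₁.WSet := ⟨u, p1⟩
      rwa [hW₁] at this
    have : α ∈ M₂.WSet := by rw [hW₂]; exact hαW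
    obtain ⟨u₂, p2⟩ := this
    rw [key hαW p1 p2]
    rw [M₁.edge_char hD₁ hW₁ p1, M₂.edge_char hD₂ hW₂ p2]
    constructor
    · rintro ⟨hk, pv⟩
      have hαρ : α ++ ρ ∈ W := hk.1.2
      have : α ++ ρ ∈ M₂.WSet := by rw [hW₂]; exact hαρ
      obtain ⟨v₂, pv₂⟩ := this
      rw [key hαρ pv pv₂]
      exact ⟨hk, pv₂⟩
    · rintro ⟨hk, pv⟩
      have hαρ : α ++ ρ ∈ W := hk.1.2
      have : α ++ ρ ∈ M₁.WSet := by rw [hW₁]; exact hαρ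
      obtain ⟨v₁, pv₁⟩ := this
      have hv : v₁ = v := φ.injective ((key hαρ pv₁ pv))
      exact ⟨hk, hv ▸ pv₁⟩
end

section
/- Let W ⊆ Σ* and let ∼ be an equivalence relation on W. Then ∼ is right-invariant if and only if for all α, β ∈ W with α ∼ β and all φ ∈ Σ⁺: (φ ∈ K(T_α) ⟺ φ ∈ K(T_β)) and (φ ∈ K(T_α) ⟹ αφ ∼ βφ). -/
/-!
Every nonempty `φ` with `αφ ∈ W` factors through the prefix-free kernel: its shortest nonempty
prefix `ψ` with `αψ ∈ W` lies in `K(T_α)`. So the kernel condition moves a related pair `(α, β)`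
to the related pair `(αψ, βψ)`, and induction on `|φ|` yields right-invariance.
-/

def KernelInvariant {A : Type} (W : Set (List A)) (r : List A → List A → Prop) : Prop :=
  ∀ α ∈ W, ∀ β ∈ W, r α β → ∀ φ : List A, φ ≠ [] →
    ((φ ∈ pfKernel (Tset W α) ↔ φ ∈ pfKernel (Tset W β)) ∧
     (φ ∈ pfKernel (Tset W α) → r (α ++ φ) (β ++ φ)))

section

variable {A : Type} {W : Set (List A)} {r : List A → List A → Prop}

theorem exists_prefix_mem_pfKernel {X : Set (List A)} {φ : List A} (hφ : φ ∈ X) :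
    ∃ ψ ∈ pfKernel X, ψ <+: φ := by
  by_cases hK : φ ∈ pfKernel X
  · exact ⟨φ, hK, List.prefix_refl φ⟩
  obtain ⟨χ, hχφ, hne, hχ⟩ : ∃ χ, χ <+: φ ∧ χ ≠ φ ∧ χ ∈ X := by
    simpa [pfKernel, hφ] using hK
  have : χ.length < φ.length := lt_of_le_of_ne hχφ.length_le (mt hχφ.eq_of_length hne)
  obtain ⟨ψ, hψ, hψχ⟩ := exists_prefix_mem_pfKernel hχ
  exact ⟨ψ, hψ, hψχ.trans hχφ⟩
termination_by φ.length

theorem Tset_eq_of_forall_append_mem_iff {α β : List A}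
    (h : ∀ φ, α ++ φ ∈ W ↔ β ++ φ ∈ W) : Tset W α = Tset W β := by
  ext φ
  simp only [Tset, Set.mem_ofPred_eq, h φ]

theorem RightInvariant.kernelInvariant (h : RightInvariant W r) : KernelInvariant W r := by
  intro α hα β hβ hr φ _
  have hT : Tset W α = Tset W β :=
    Tset_eq_of_forall_append_mem_iff fun ψ => (h α hα β hβ hr ψ).1
  exact ⟨by rw [hT], fun hφ => (h α hα β hβ hr φ).2 hφ.1.2⟩

namespace KernelInvariant

theorem exists_prefix_mem_pfKernel_Tset (h : KernelInvariant W r) {α β φ : List A}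
    (hα : α ∈ W) (hβ : β ∈ W) (hr : r α β) (hφ : φ ≠ [])
    (hmem : α ++ φ ∈ W ∨ β ++ φ ∈ W) : ∃ ψ ∈ pfKernel (Tset W α), ψ <+: φ := by
  rcases hmem with hmem | hmem
  · exact exists_prefix_mem_pfKernel ⟨hφ, hmem⟩
  · obtain ⟨ψ, hψ, hψφ⟩ := exists_prefix_mem_pfKernel (X := Tset W β) ⟨hφ, hmem⟩
    exact ⟨ψ, (h α hα β hβ hr ψ hψ.1.1).1.2 hψ, hψφ⟩

theorem append_mem_and_rel (h : KernelInvariant W r) (φ : List A) {α β : List A}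
    (hα : α ∈ W) (hβ : β ∈ W) (hr : r α β) (hmem : α ++ φ ∈ W ∨ β ++ φ ∈ W) :
    α ++ φ ∈ W ∧ β ++ φ ∈ W ∧ r (α ++ φ) (β ++ φ) := by
  rcases eq_or_ne φ [] with rfl | hφ
  · simpa using ⟨hα, hβ, hr⟩
  obtain ⟨ψ, hψ, φ', rfl⟩ := h.exists_prefix_mem_pfKernel_Tset hα hβ hr hφ hmem
  obtain ⟨hK, hrel⟩ := h α hα β hβ hr ψ hψ.1.1
  have : φ'.length < (ψ ++ φ').length := by
    simpa using List.length_pos_iff.mpr hψ.1.1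
  simpa using h.append_mem_and_rel φ' hψ.1.2 (hK.1 hψ).1.2 (hrel hψ) (by simpa using hmem)
termination_by φ.length

theorem rightInvariant (h : KernelInvariant W r) : RightInvariant W r := by
  intro α hα β hβ hr φ
  have key := h.append_mem_and_rel φ hα hβ hr
  exact ⟨⟨fun hφ => (key (.inl hφ)).2.1, fun hφ => (key (.inr hφ)).1⟩,
    fun hφ => (key (.inl hφ)).2.2⟩

end KernelInvariant

end

theorem rightInvariant_iff_kernel_general {A : Type}
    (W : Set (List A)) (r : List A → List A → Prop) :
    RightInvariant W r ↔
      ∀ α ∈ W, ∀ β ∈ W, r α β → ∀ φ : List A, φ ≠ [] →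
        ((φ ∈ pfKernel (Tset W α) ↔ φ ∈ pfKernel (Tset W β)) ∧
         (φ ∈ pfKernel (Tset W α) → r (α ++ φ) (β ++ φ))) :=
  ⟨RightInvariant.kernelInvariant, KernelInvariant.rightInvariant⟩

/-- An equivalence relation `∼` on `W` is right-invariant iff for all `α ∼ β` in `W`
and every nonempty string `φ`: `φ ∈ K(T_α) ⟺ φ ∈ K(T_β)`, and `φ ∈ K(T_α)` implies
`αφ ∼ βφ`. -/
theorem rightInvariant_iff_kernel {A : Type} [Fintype A]
    (W : Set (List A)) (r : List A → List A → Prop) (hEq : IsEquivOn W r) :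
    RightInvariant W r ↔
      ∀ α ∈ W, ∀ β ∈ W, r α β → ∀ φ : List A, φ ≠ [] →
        ((φ ∈ pfKernel (Tset W α) ↔ φ ∈ pfKernel (Tset W β)) ∧
         (φ ∈ pfKernel (Tset W α) → r (α ++ φ) (β ++ φ))) :=
  rightInvariant_iff_kernel_general W r
end

section
/- Let A = (Q, E, s, F) be a GNFA. Then ≡_A is right-invariant, ≡_A refines ≡_{L(A),W(A)}, ≡_A has finite index, and L(A) is a union of ≡_A-classes. -/
namespace GNFAProof

open GNFA

variable {A Q : Type}

lemma edgePath_trans {E : Set (Q × Q × List A)} {s m : Q} {α : List A}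
    (h1 : EdgePath E s α m) :
    ∀ {w : Q} {φ : List A}, EdgePath E m φ w → EdgePath E s (α ++ φ) w := by
  induction h1 with
  | refl => intro w φ h2; exact h2
  | step he _ ih =>
    intro w φ h2
    rw [List.append_assoc]
    exact EdgePath.step he (ih h2)

lemma edgePath_split {E : Set (Q × Q × List A)} {s w : Q} {δ : List A}
    (h : EdgePath E s δ w) : ∀ α φ : List A, δ = α ++ φ →
    (∃ m, EdgePath E s α m ∧ EdgePath E m φ w) ∨
    (∃ u v σ τ ψ γ, (u, v, σ ++ τ) ∈ E ∧ τ ≠ [] ∧ γ ++ σ = α ∧ τ ++ ψ = φ ∧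
      EdgePath E s γ u ∧ EdgePath E v ψ w) := by
  induction h with
  | refl s' =>
    intro α φ hd
    obtain ⟨hα, hφ⟩ := List.append_eq_nil_iff.mp hd.symm
    subst hα; subst hφ
    exact Or.inl ⟨s', .refl _, .refl _⟩
  | @step u v w' ρ α' he hp ih =>
    intro α φ hd
    rcases List.append_eq_append_iff.mp hd with ⟨c, hc1, hc2⟩ | ⟨c, hc1, hc2⟩
    · rcases ih c φ hc2 with ⟨m, p1, p2⟩ | ⟨u₂, v₂, σ, τ, ψ, γ, hedge, hτ, hγσ, hτψ, pγ, pψ⟩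
      · refine Or.inl ⟨m, ?_, p2⟩
        rw [hc1]
        exact EdgePath.step he p1
      · refine Or.inr ⟨u₂, v₂, σ, τ, ψ, ρ ++ γ, hedge, hτ, ?_, hτψ, EdgePath.step he pγ, pψ⟩
        rw [List.append_assoc, hγσ, hc1]
    · by_cases hc : c = []
      · subst hc
        rw [List.append_nil] at hc1
        refine Or.inl ⟨v, ?_, by rw [hc2]; exact hp⟩
        have := EdgePath.step he (EdgePath.refl v)
        rwa [List.append_nil, hc1] at this
      · refine Or.inr ⟨u, v, α, c, α', [], by rwa [← hc1], hc, List.nil_append α,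
          hc2.symm, .refl u, hp⟩

/-- The boundary configurations after reading `α`: pairs `(v, τ)` such that an edge
`(u, v, σ ++ τ)` straddles the boundary, with the `σ` part completing `α`. -/
def Cset (M : GNFA A Q) (α : List A) : Set (Q × List A) :=
  {p | p.2 ≠ [] ∧ ∃ u σ γ, (u, p.1, σ ++ p.2) ∈ M.E ∧ γ ++ σ = α ∧
    EdgePath M.E M.init γ u}

lemma iword_append (M : GNFA A Q) (α φ : List A) :
    M.Iword (α ++ φ) = {w | (∃ u ∈ M.Iword α, EdgePath M.E u φ w) ∨
      ∃ v τ ψ, (v, τ) ∈ Cset M α ∧ τ ++ ψ = φ ∧ EdgePath M.E v ψ w} := by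
  ext w
  constructor
  · intro h
    rcases edgePath_split h α φ rfl with ⟨m, p1, p2⟩ |
        ⟨u, v, σ, τ, ψ, γ, hedge, hτ, hγσ, hτψ, pγ, pψ⟩
    · exact Or.inl ⟨m, p1, p2⟩
    · exact Or.inr ⟨v, τ, ψ, ⟨hτ, u, σ, γ, hedge, hγσ, pγ⟩, hτψ, pψ⟩
  · rintro (⟨u, hu, hp⟩ | ⟨v, τ, ψ, ⟨hτ, u, σ, γ, hedge, hγσ, pγ⟩, hτψ, pψ⟩)
    · exact edgePath_trans hu hp
    · have h := edgePath_trans pγ (EdgePath.step hedge pψ)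
      have heq : γ ++ ((σ ++ τ) ++ ψ) = α ++ φ := by
        rw [← hγσ, ← hτψ]; simp [List.append_assoc]
      rwa [heq] at h

lemma iword_append_eq (M : GNFA A Q) {α β : List A}
    (h1 : M.Iword α = M.Iword β) (h2 : Cset M α = Cset M β) (φ : List A) :
    M.Iword (α ++ φ) = M.Iword (β ++ φ) := by
  rw [iword_append, iword_append, h1, h2]

lemma mem_WSet_iff (M : GNFA A Q) (α : List A) :
    α ∈ M.WSet ↔ (M.Iword α).Nonempty := Iff.rfl

lemma equivA_of (M : GNFA A Q) {α β : List A}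
    (h : ∀ φ, M.Iword (α ++ φ) = M.Iword (β ++ φ)) : M.equivA α β := by
  intro φ
  refine ⟨?_, fun _ => h φ⟩
  rw [mem_WSet_iff, mem_WSet_iff, h φ]

lemma equivA_symm (M : GNFA A Q) {α β : List A} (h : M.equivA α β) : M.equivA β α := by
  intro φ
  exact ⟨(h φ).1.symm, fun hb => ((h φ).2 ((h φ).1.mpr hb)).symm⟩

lemma equivA_trans (M : GNFA A Q) {α β γ : List A} (h1 : M.equivA α β)
    (h2 : M.equivA β γ) : M.equivA α γ := by
  intro φ
  refine ⟨(h1 φ).1.trans (h2 φ).1, fun ha => ?_⟩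
  exact ((h1 φ).2 ha).trans ((h2 φ).2 ((h1 φ).1.mp ha))

lemma eqClass_eq (M : GNFA A Q) {α β : List A} (h : M.equivA α β) :
    eqClass M.WSet M.equivA α = eqClass M.WSet M.equivA β := by
  ext γ
  exact ⟨fun ⟨hw, hg⟩ => ⟨hw, equivA_trans M (equivA_symm M h) hg⟩,
    fun ⟨hw, hg⟩ => ⟨hw, equivA_trans M h hg⟩⟩

end GNFAProof

open GNFAProof

/-- For a GNFA `A`: `≡_A` is right-invariant, it refines `≡_{L(A),W(A)}`, it has
finite index, and `L(A)` is a union of `≡_A`-classes. -/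
theorem equivA_properties {A Q : Type} [Fintype A] (M : GNFA A Q) :
    RightInvariant M.WSet M.equivA ∧
    (∀ α ∈ M.WSet, ∀ β ∈ M.WSet, M.equivA α β → mnEquiv M.Lang M.WSet α β) ∧
    FiniteIndex M.WSet M.equivA ∧
    UnionOfClasses M.WSet M.equivA M.Lang := by
  classical
  haveI := M.finQ
  refine ⟨?_, ?_, ?_, ?_⟩
  · -- right invariance
    intro α _ β _ h φ
    refine ⟨(h φ).1, fun _ => ?_⟩
    intro ψ
    have := h (φ ++ ψ)
    rwa [← List.append_assoc, ← List.append_assoc] at this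
  · -- refines Myhill–Nerode
    intro α _ β _ h φ
    refine ⟨(h φ).1, fun hw => ?_⟩
    have heq := (h φ).2 hw
    constructor
    · rintro ⟨u, hu, hp⟩
      refine ⟨u, hu, ?_⟩
      show u ∈ M.Iword (β ++ φ)
      rw [← heq]; exact hp
    · rintro ⟨u, hu, hp⟩
      refine ⟨u, hu, ?_⟩
      show u ∈ M.Iword (α ++ φ)
      rw [heq]; exact hp
  · -- finite index
    set D := fun α => (M.Iword α, Cset M α) with hD
    set S : Set (Set Q × Set (Q × List A)) := {d | ∃ α ∈ M.WSet, D α = d} with hS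
    have hSufFin : ({p : Q × List A | ∃ u σ, (u, p.1, σ ++ p.2) ∈ M.E}).Finite := by
      refine Set.Finite.subset
        (M.finE.biUnion (fun e _ =>
          ((e.2.2.tails).finite_toSet.image (fun τ => (e.2.1, τ))))) ?_
      rintro ⟨v, τ⟩ ⟨u, σ, he⟩
      exact Set.mem_biUnion he ⟨τ, (List.mem_tails _ _).mpr ⟨σ, rfl⟩, rfl⟩
    have hSfin : S.Finite := by
      refine Set.Finite.subset (Set.Finite.prod (Set.finite_univ)
        hSufFin.finite_subsets) ?_
      rintro ⟨I, C⟩ ⟨α, _, hα⟩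
      refine ⟨Set.mem_univ _, ?_⟩
      rintro ⟨v, τ⟩ hvτ
      have h2 : Cset M α = C := congrArg Prod.snd hα
      have : (v, τ) ∈ Cset M α := h2.symm ▸ hvτ
      obtain ⟨_, u, σ, γ, hedge, _, _⟩ := this
      exact ⟨u, σ, hedge⟩
    have hDeq : ∀ {α β}, D α = D β → M.equivA α β := by
      intro α β h
      rw [Prod.mk.injEq] at h
      exact equivA_of M (iword_append_eq M h.1 h.2)
    set g : (Set Q × Set (Q × List A)) → Set (List A) := fun d =>
      if h : ∃ α, α ∈ M.WSet ∧ D α = d then eqClass M.WSet M.equivA h.choose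
      else ∅ with hg
    refine Set.Finite.subset (hSfin.image g) ?_
    rintro s ⟨α, hαW, rfl⟩
    refine ⟨D α, ⟨α, hαW, rfl⟩, ?_⟩
    have hex : ∃ β, β ∈ M.WSet ∧ D β = D α := ⟨α, hαW, rfl⟩
    rw [hg]
    simp only [dif_pos hex]
    exact eqClass_eq M (hDeq hex.choose_spec.2)
  · -- union of classes
    intro α hαL β _ h
    obtain ⟨u, hu, hp⟩ := hαL
    have hαW : α ∈ M.WSet := ⟨u, hp⟩
    have heq := (h []).2 (by rwa [List.append_nil])
    rw [List.append_nil, List.append_nil] at heq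
    refine ⟨u, hu, ?_⟩
    show u ∈ M.Iword β
    rw [← heq]; exact hp
end

section
/- Let L ⊆ Σ* and let W ⊆ Σ* be a locally bounded set such that L ∪ {ε} ⊆ W ⊆ Pref(L). Let ∼ be a right-invariant equivalence relation on W of finite index such that L is a union of ∼-classes. Define the automaton A_∼ = (Q_∼, E_∼, s_∼, F_∼) by: Q_∼ = {[α]_∼ : α ∈ W}, s_∼ = [ε]_∼, E_∼ = {([α]_∼, [αρ]_∼, ρ) : α ∈ W, ρ ∈ K(T_α)}, F_∼ = {[α]_∼ : α ∈ L}. Then A_∼ is a well-defined W-GDFA recognizing L, the number of states of A_∼ equals the index of ∼, and the equivalence relation ≡_{A_∼} coincides with ∼. -/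
set_option maxHeartbeats 1000000


/-- Auxiliary: edge set of the automaton `A_∼`. -/
def clEdges {A : Type} (W : Set (List A)) (r : List A → List A → Prop) :
    Set ({s : Set (List A) // ∃ α ∈ W, s = eqClass W r α} ×
      {s : Set (List A) // ∃ α ∈ W, s = eqClass W r α} × List A) :=
  {e | ∃ α ∈ W, e.2.2 ∈ pfKernel (Tset W α) ∧ e.1.val = eqClass W r α ∧
    e.2.1.val = eqClass W r (α ++ e.2.2)}

/-- Auxiliary: initial state of the automaton `A_∼`. -/
def clInit {A : Type} (W : Set (List A)) (r : List A → List A → Prop)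
    (hε : ([] : List A) ∈ W) : {s : Set (List A) // ∃ α ∈ W, s = eqClass W r α} :=
  ⟨eqClass W r [], [], hε, rfl⟩

/-- Auxiliary: final states of the automaton `A_∼`. -/
def clFinal {A : Type} (L W : Set (List A)) (r : List A → List A → Prop) :
    Set {s : Set (List A) // ∃ α ∈ W, s = eqClass W r α} :=
  {u | ∃ α ∈ L, u.val = eqClass W r α}

/-- From a right-invariant equivalence relation `∼` on a locally bounded `W` (with
`L ∪ {ε} ⊆ W ⊆ Pref L`) of finite index such that `L` is a union of `∼`-classes, one
obtains the `W`-GDFA `A_∼`: its states are the `∼`-classes of `W`, its initial state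
is `[ε]_∼`, its edges are `([α]_∼, [αρ]_∼, ρ)` for `α ∈ W` and `ρ ∈ K(T_α)`, and its
final states are the `[α]_∼` for `α ∈ L`. The automaton `A_∼` is a well-defined
`W`-GDFA recognizing `L`, its number of states equals the index of `∼`, and
`≡_{A_∼}` coincides with `∼` on `W`. -/

theorem automaton_from_rightInvariant_equivalence {A : Type} [Fintype A]
    (L W : Set (List A)) (hLB : LocallyBounded W) (hLsub : L ⊆ W)
    (hε : ([] : List A) ∈ W) (hWP : W ⊆ Pref L)
    (r : List A → List A → Prop) (hEq : IsEquivOn W r) (hRI : RightInvariant W r)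
    (hFI : FiniteIndex W r) (hU : UnionOfClasses W r L) :
    ∃ M : GNFA A {s : Set (List A) // ∃ α ∈ W, s = eqClass W r α},
      M.init.val = eqClass W r [] ∧
      (∀ u v ρ, (u, v, ρ) ∈ M.E ↔
        ∃ α ∈ W, ρ ∈ pfKernel (Tset W α) ∧
          u.val = eqClass W r α ∧ v.val = eqClass W r (α ++ ρ)) ∧
      (∀ u, u ∈ M.final ↔ ∃ α ∈ L, u.val = eqClass W r α) ∧
      M.IsGDFA ∧ M.WSet = W ∧ M.Lang = L ∧
      Nat.card {s : Set (List A) // ∃ α ∈ W, s = eqClass W r α} =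
        Nat.card {s : Set (List A) | ∃ α ∈ W, s = eqClass W r α} ∧
      (∀ α ∈ W, ∀ β ∈ W, (M.equivA α β ↔ r α β)) := by
  classical
  obtain ⟨hrefl, hsymm, htrans⟩ := hEq
  -- class equality iff relation
  have hmem : ∀ α ∈ W, α ∈ eqClass W r α := fun α hα => ⟨hα, hrefl α hα⟩
  have hcls : ∀ α ∈ W, ∀ β ∈ W, (eqClass W r α = eqClass W r β ↔ r α β) := by
    intro α hα β hβ
    constructor
    · intro h
      have hb : β ∈ eqClass W r α := h ▸ hmem β hβ
      exact hb.2
    · intro h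
      ext γ
      constructor
      · rintro ⟨hγ, hrγ⟩
        exact ⟨hγ, htrans β α γ hβ hα hγ (hsymm α β hα hβ h) hrγ⟩
      · rintro ⟨hγ, hrγ⟩
        exact ⟨hγ, htrans α β γ hα hβ hγ h hrγ⟩
  have hTeq : ∀ α ∈ W, ∀ β ∈ W, r α β → Tset W α = Tset W β := by
    intro α hα β hβ h
    ext ρ
    exact and_congr_right fun _ => (hRI α hα β hβ h ρ).1
  -- Decomposition: shortest nonempty prefix of φ extending β within W
  have hdec : ∀ β ∈ W, ∀ φ : List A, φ ≠ [] → β ++ φ ∈ W →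
      ∃ ρ φ', φ = ρ ++ φ' ∧ ρ ≠ [] ∧ ρ ∈ pfKernel (Tset W β) ∧ β ++ ρ ∈ W := by
    intro β hβ φ hφ hβφ
    have hS : ∃ n, 0 < n ∧ n ≤ φ.length ∧ β ++ φ.take n ∈ W := by
      refine ⟨φ.length, List.length_pos_iff.2 hφ, le_rfl, by simpa using hβφ⟩
    classical
    obtain ⟨n, ⟨hn0, hnle, hnW⟩, hnmin⟩ :
        ∃ n, (0 < n ∧ n ≤ φ.length ∧ β ++ φ.take n ∈ W) ∧
          ∀ m, m < n → ¬(0 < m ∧ m ≤ φ.length ∧ β ++ φ.take m ∈ W) :=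
      ⟨Nat.find hS, Nat.find_spec hS, fun m hm => Nat.find_min hS hm⟩
    have htlen : (List.take n φ).length = n := by
      rw [List.length_take]; omega
    have htne : List.take n φ ≠ [] := by
      intro h; rw [h] at htlen; simp at htlen; omega
    refine ⟨φ.take n, φ.drop n, (List.take_append_drop n φ).symm, htne, ?_, hnW⟩
    refine ⟨⟨htne, hnW⟩, ?_⟩
    rintro σ hpre hne ⟨hσne, hσW⟩
    have hm : σ.length ≤ n := by
      have h2 := hpre.length_le
      rw [htlen] at h2; exact h2
    have hσeq : σ = φ.take σ.length :=
      List.prefix_iff_eq_take.1 (hpre.trans (List.take_prefix n φ))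
    have hmlt : σ.length < n := by
      rcases lt_or_eq_of_le hm with h | h
      · exact h
      · exfalso
        apply hne
        rw [h] at hσeq
        exact hσeq
    exact hnmin σ.length hmlt
      ⟨List.length_pos_iff.2 hσne, le_trans (le_of_lt hmlt) hnle, by rw [← hσeq]; exact hσW⟩
  -- The state type and edge set
  have hE : ∀ u v ρ, ((u, v, ρ) ∈ clEdges W r ↔
      ∃ α ∈ W, ρ ∈ pfKernel (Tset W α) ∧
        u.val = eqClass W r α ∧ v.val = eqClass W r (α ++ ρ)) := by
    intro u v ρ; rfl
  -- states along paths are determined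
  have path_spec : ∀ u φ v, EdgePath (clEdges W r) u φ v → ∀ β ∈ W, u.val = eqClass W r β →
      β ++ φ ∈ W ∧ v.val = eqClass W r (β ++ φ) := by
    intro u φ v hp
    induction hp with
    | refl u => intro β hβ hu; simpa using ⟨hβ, hu⟩
    | @step u v w ρ ψ he hp ih =>
      intro β hβ hu
      obtain ⟨α, hα, hρ, hu', hv'⟩ := he
      have hrab : r α β := (hcls α hα β hβ).1 (hu'.symm.trans hu)
      have hαρ : α ++ ρ ∈ W := hρ.1.2
      have hβρ : β ++ ρ ∈ W := (hRI α hα β hβ hrab ρ).1.1 hαρ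
      have hr2 : r (α ++ ρ) (β ++ ρ) := (hRI α hα β hβ hrab ρ).2 hαρ
      have hv2 : v.val = eqClass W r (β ++ ρ) :=
        hv'.trans ((hcls (α ++ ρ) hαρ (β ++ ρ) hβρ).2 hr2)
      have := ih (β ++ ρ) hβρ hv2
      rw [List.append_assoc] at this
      exact this
  -- path existence
  have path_exists : ∀ n (φ : List A), φ.length ≤ n → ∀ β ∈ W, β ++ φ ∈ W →
      ∀ u v : {s : Set (List A) // ∃ α ∈ W, s = eqClass W r α},
        u.val = eqClass W r β → v.val = eqClass W r (β ++ φ) →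
        EdgePath (clEdges W r) u φ v := by
    intro n
    induction n with
    | zero =>
      intro φ hφ β hβ hβφ u v hu hv
      have : φ = [] := List.length_eq_zero_iff.1 (Nat.le_zero.1 hφ)
      subst this
      have : u = v := Subtype.ext (by rw [hu, hv, List.append_nil])
      subst this
      exact EdgePath.refl u
    | succ n ih =>
      intro φ hφ β hβ hβφ u v hu hv
      by_cases h0 : φ = []
      · subst h0
        have : u = v := Subtype.ext (by rw [hu, hv, List.append_nil])
        subst this
        exact EdgePath.refl u
      · obtain ⟨ρ, φ', hsplit, hρne, hρK, hβρ⟩ := hdec β hβ φ h0 hβφ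
        obtain ⟨m, hm⟩ : ∃ m : {s : Set (List A) // ∃ α ∈ W, s = eqClass W r α},
            m.val = eqClass W r (β ++ ρ) := ⟨⟨eqClass W r (β ++ ρ), β ++ ρ, hβρ, rfl⟩, rfl⟩
        have hedge : (u, m, ρ) ∈ clEdges W r := ⟨β, hβ, hρK, hu, hm⟩
        have hlen : φ'.length ≤ n := by
          have := congrArg List.length hsplit
          simp at this
          have hρpos : 0 < ρ.length := List.length_pos_iff.2 hρne
          omega
        have hrest : EdgePath (clEdges W r) m φ' v := by
          apply ih φ' hlen (β ++ ρ) hβρ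
          · rw [List.append_assoc, ← hsplit]; exact hβφ
          · exact hm
          · rw [hv, hsplit, List.append_assoc]
        rw [hsplit]
        exact EdgePath.step hedge hrest
  -- the automaton
  have hfinQ : Finite {s : Set (List A) // ∃ α ∈ W, s = eqClass W r α} :=
    hFI.to_subtype
  -- representative of a state
  obtain ⟨rep, hrep⟩ : ∃ rep : {s : Set (List A) // ∃ α ∈ W, s = eqClass W r α} → List A,
      ∀ u, rep u ∈ W ∧ u.val = eqClass W r (rep u) :=
    ⟨fun u => u.prop.choose, fun u => ⟨u.prop.choose_spec.1, u.prop.choose_spec.2⟩⟩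
  have hfinE : (clEdges W r).Finite := by
    have hsub : clEdges W r ⊆ ⋃ (p : {s : Set (List A) // ∃ α ∈ W, s = eqClass W r α} ×
        {s : Set (List A) // ∃ α ∈ W, s = eqClass W r α}),
        (fun ρ => (p.1, p.2, ρ)) '' pfKernel (Tset W (rep p.1)) := by
      rintro ⟨u, v, ρ⟩ ⟨α, hα, hρ, hu, hv⟩
      refine Set.mem_iUnion.2 ⟨(u, v), ⟨ρ, ?_, rfl⟩⟩
      have hr1 : r α (rep u) :=
        (hcls α hα (rep u) (hrep u).1).1 ((hu.symm.trans (hrep u).2))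
      rw [← hTeq α hα (rep u) (hrep u).1 hr1]
      exact hρ
    haveI := hfinQ
    exact Set.Finite.subset
      (Set.finite_iUnion fun p : {s : Set (List A) // ∃ α ∈ W, s = eqClass W r α} ×
          {s : Set (List A) // ∃ α ∈ W, s = eqClass W r α} =>
        ((hLB (rep p.1) (hrep p.1).1).image (fun ρ => (p.1, p.2, ρ)))) hsub
  -- path from (clInit W r hε) reading γ for γ ∈ W
  have init_path : ∀ γ ∈ W, ∀ v, v.val = eqClass W r γ → EdgePath (clEdges W r) (clInit W r hε) γ v := by
    intro γ hγ v hv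
    have := path_exists γ.length γ le_rfl [] hε (by simpa using hγ) (clInit W r hε) v rfl
      (by simpa using hv)
    exact this
  have path_from_init : ∀ γ v, EdgePath (clEdges W r) (clInit W r hε) γ v → γ ∈ W ∧ v.val = eqClass W r γ := by
    intro γ v hp
    have := path_spec (clInit W r hε) γ v hp [] hε rfl
    simpa using this
  have hreach : ∀ u, ∃ α : List A, EdgePath (clEdges W r) (clInit W r hε) α u :=
    fun u => ⟨rep u, init_path (rep u) (hrep u).1 u (hrep u).2⟩
  have hcoreach : ∀ u, ∃ (α : List A) (v : _), v ∈ (clFinal L W r) ∧ EdgePath (clEdges W r) u α v := by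
    intro u
    obtain ⟨γ, hγL, hpre⟩ := hWP (hrep u).1
    obtain ⟨φ, hφ⟩ := hpre
    refine ⟨φ, ⟨eqClass W r γ, γ, hLsub hγL, rfl⟩, ⟨γ, hγL, rfl⟩, ?_⟩
    apply path_exists φ.length φ le_rfl (rep u) (hrep u).1
      (by rw [hφ]; exact hLsub hγL) u _ (hrep u).2 (by rw [hφ])
  refine ⟨⟨clEdges W r, (clInit W r hε), (clFinal L W r), hfinQ, hfinE, hreach, hcoreach⟩, rfl, hE, fun u => Iff.rfl,
    ?_, ?_, ?_, rfl, ?_⟩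
  · -- GDFA
    refine ⟨?_, ?_, ?_⟩
    · rintro u v ρ ⟨α, hα, hρ, -, -⟩ h
      exact hρ.1.1 h
    · rintro u v v' ρ ⟨α, hα, hρ, hu, hv⟩ ⟨α', hα', hρ', hu', hv'⟩
      have hr1 : r α α' := (hcls α hα α' hα').1 (hu.symm.trans hu')
      have hαρ : α ++ ρ ∈ W := hρ.1.2
      have hα'ρ : α' ++ ρ ∈ W := hρ'.1.2
      have hr2 : r (α ++ ρ) (α' ++ ρ) := (hRI α hα α' hα' hr1 ρ).2 hαρ
      exact Subtype.ext (hv.trans (((hcls _ hαρ _ hα'ρ).2 hr2).trans hv'.symm))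
    · rintro u v v' ρ ρ' ⟨α, hα, hρ, hu, -⟩ ⟨α', hα', hρ', hu', -⟩ hpre
      have hr1 : r α α' := (hcls α hα α' hα').1 (hu.symm.trans hu')
      have hT : Tset W α = Tset W α' := hTeq α hα α' hα' hr1
      by_contra hne
      exact hρ'.2 ρ hpre hne (hT ▸ hρ.1)
  · -- WSet = W
    ext γ
    constructor
    · rintro ⟨u, hp⟩
      exact (path_from_init γ u hp).1
    · intro hγ
      exact ⟨⟨eqClass W r γ, γ, hγ, rfl⟩, init_path γ hγ _ rfl⟩
  · -- Lang = L
    ext γ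
    constructor
    · rintro ⟨u, ⟨δ, hδL, hδcl⟩, hp⟩
      obtain ⟨hγW, hγcl⟩ := path_from_init γ u hp
      have : r δ γ := (hcls δ (hLsub hδL) γ hγW).1 (hδcl.symm.trans hγcl)
      exact hU δ hδL γ hγW this
    · intro hγ
      exact ⟨⟨eqClass W r γ, γ, hLsub hγ, rfl⟩, ⟨γ, hγ, rfl⟩,
        init_path γ (hLsub hγ) _ rfl⟩
  · -- equivA ↔ r
    intro α hα β hβ
    -- set M for notation
    set M : GNFA A {s : Set (List A) // ∃ α ∈ W, s = eqClass W r α} :=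
      ⟨clEdges W r, (clInit W r hε), (clFinal L W r), hfinQ, hfinE, hreach, hcoreach⟩ with hM
    have hWeq : M.WSet = W := by
      ext γ
      constructor
      · rintro ⟨u, hp⟩
        exact (path_from_init γ u hp).1
      · intro hγ
        exact ⟨⟨eqClass W r γ, γ, hγ, rfl⟩, init_path γ hγ _ rfl⟩
    have hIword : ∀ γ, ∀ hγ : γ ∈ W, M.Iword γ = {⟨eqClass W r γ, γ, hγ, rfl⟩} := by
      intro γ hγ
      ext u
      constructor
      · intro hp
        exact Subtype.ext (path_from_init γ u hp).2
      · rintro rfl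
        exact init_path γ hγ _ rfl
    constructor
    · intro h
      have h0 := (h []).2 (by rw [hWeq]; simpa using hα)
      have hIα := hIword α hα
      have hIβ := hIword β hβ
      simp only [List.append_nil] at h0
      have : (⟨eqClass W r α, α, hα, rfl⟩ :
          {s : Set (List A) // ∃ α ∈ W, s = eqClass W r α}) =
          ⟨eqClass W r β, β, hβ, rfl⟩ := by
        have := h0
        rw [GNFA.simA, hIα, hIβ] at this
        exact Set.singleton_eq_singleton_iff.1 this
      exact (hcls α hα β hβ).1 (congrArg Subtype.val this)
    · intro h φ
      have hiff := (hRI α hα β hβ h φ).1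
      constructor
      · rw [hWeq]; exact hiff
      · intro hαφ
        rw [hWeq] at hαφ
        have hβφ : β ++ φ ∈ W := hiff.1 hαφ
        have hr2 : r (α ++ φ) (β ++ φ) := (hRI α hα β hβ h φ).2 hαφ
        have hceq : eqClass W r (α ++ φ) = eqClass W r (β ++ φ) :=
          (hcls _ hαφ _ hβφ).2 hr2
        show M.Iword (α ++ φ) = M.Iword (β ++ φ)
        rw [hIword _ hαφ, hIword _ hβφ]
        exact congrArg _ (Subtype.ext hceq)
end

section
/- Let L ⊆ Σ*, let W ⊆ Σ* be a locally bounded set such that L ∪ {ε} ⊆ W ⊆ Pref(L), and let B be a W-GDFA recognizing L. Then the W-GDFA A_{≡_B} built from the right-invariant equivalence relation ≡_B (with states the ≡_B-classes of W, initial state [ε], edges {([α], [αρ], ρ) : α ∈ W, ρ ∈ K(T_α)}, and final states {[α] : α ∈ L}) is isomorphic to B. -/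
private lemma EdgePath.append' {A Q : Type} {E : Set (Q × Q × List A)} {u v w : Q}
    {α β : List A} (h1 : EdgePath E u α v) (h2 : EdgePath E v β w) :
    EdgePath E u (α ++ β) w := by
  induction h1 with
  | refl => simpa using h2
  | step e _ ih => rw [List.append_assoc]; exact EdgePath.step e (ih h2)

private lemma edgepath_nil {A Q : Type} {E : Set (Q × Q × List A)}
    (hne : ∀ u v ρ, (u, v, ρ) ∈ E → ρ ≠ []) {u v : Q}
    (h : EdgePath E u [] v) : u = v := by
  generalize hγ : ([] : List A) = γ at h
  induction h with
  | refl => rfl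
  | step e p ih => exact absurd (List.append_eq_nil_iff.mp hγ.symm).1 (hne _ _ _ e)

private lemma edgepath_cons {A Q : Type} {E : Set (Q × Q × List A)} {q w : Q} {γ : List A}
    (h : EdgePath E q γ w) (hγ : γ ≠ []) :
    ∃ v σ rest, (q, v, σ) ∈ E ∧ EdgePath E v rest w ∧ σ ++ rest = γ := by
  cases h with
  | refl => exact absurd rfl hγ
  | step e p => exact ⟨_, _, _, e, p, rfl⟩

private lemma edgepath_factor {A Q : Type} {E : Set (Q × Q × List A)}
    (hne : ∀ u v ρ, (u, v, ρ) ∈ E → ρ ≠ [])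
    (hdet : ∀ u v v' ρ, (u, v, ρ) ∈ E → (u, v', ρ) ∈ E → v = v')
    (hpf : ∀ u v v' ρ ρ', (u, v, ρ) ∈ E → (u, v', ρ') ∈ E → ρ <+: ρ' → ρ = ρ') :
    ∀ {q α u}, EdgePath E q α u → ∀ {φ w}, EdgePath E q (α ++ φ) w → EdgePath E u φ w := by
  intro q α u h1
  induction h1 with
  | refl => intro φ w h2; simpa using h2
  | @step q v _ ρ α' e p ih =>
    intro φ w h2
    rw [List.append_assoc] at h2
    obtain ⟨v₂, σ, rest, e2, p2, heq⟩ := edgepath_cons h2 (by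
      intro hnil; exact (hne _ _ _ e) (List.append_eq_nil_iff.mp hnil).1)
    -- σ and ρ are comparable prefixes of the same list
    have hσ : σ <+: ρ ++ (α' ++ φ) := heq ▸ ⟨rest, rfl⟩
    have hρ : ρ <+: ρ ++ (α' ++ φ) := ⟨α' ++ φ, rfl⟩
    have hcomp := List.prefix_or_prefix_of_prefix hσ hρ
    have hσρ : σ = ρ := by
      rcases hcomp with hc | hc
      · exact hpf _ _ _ _ _ e2 e hc
      · exact (hpf _ _ _ _ _ e e2 hc).symm
    subst hσρ
    have hv : v₂ = v := hdet _ _ _ _ e2 e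
    subst hv
    have hrest : rest = α' ++ φ := List.append_cancel_left heq
    subst hrest
    exact ih p2

/-- If `B` is a `W`-GDFA recognizing `L`, then the automaton `A_{≡_B}` built from the
right-invariant equivalence relation `≡_B` (states: the `≡_B`-classes of `W`; initial
state `[ε]`; edges `([α], [αρ], ρ)` for `α ∈ W`, `ρ ∈ K(T_α)`; final states `[α]` for
`α ∈ L`) is isomorphic to `B`. -/
theorem automaton_of_equivB_isomorphic {A : Type} [Fintype A]
    (L W : Set (List A)) (hLB : LocallyBounded W) (hLsub : L ⊆ W)
    (hε : ([] : List A) ∈ W) (hWP : W ⊆ Pref L)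
    {QB : Type} (B : GNFA A QB) (hDB : B.IsGDFA) (hWB : B.WSet = W) (hLB' : B.Lang = L)
    (M : GNFA A {s : Set (List A) // ∃ α ∈ W, s = eqClass W B.equivA α})
    (hinit : M.init.val = eqClass W B.equivA [])
    (hE : ∀ u v ρ, (u, v, ρ) ∈ M.E ↔
      ∃ α ∈ W, ρ ∈ pfKernel (Tset W α) ∧
        u.val = eqClass W B.equivA α ∧ v.val = eqClass W B.equivA (α ++ ρ))
    (hF : ∀ u, u ∈ M.final ↔ ∃ α ∈ L, u.val = eqClass W B.equivA α) :
    M.Isomorphic B := by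
  classical
  obtain ⟨hne, hdet, hpf⟩ := hDB
  have hWiff : ∀ α, α ∈ W ↔ ∃ u, EdgePath B.E B.init α u := by
    intro α; rw [← hWB]; rfl
  set δ : List A → QB := fun α =>
    if h : ∃ u, EdgePath B.E B.init α u then h.choose else B.init with hδdef
  have hδ : ∀ α ∈ W, EdgePath B.E B.init α (δ α) := by
    intro α hα
    have h := (hWiff α).mp hα
    simp only [hδdef, dif_pos h]
    exact h.choose_spec
  have huniq : ∀ α u, EdgePath B.E B.init α u → u = δ α := by
    intro α u h
    have hαW : α ∈ W := (hWiff α).mpr ⟨u, h⟩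
    exact edgepath_nil hne (edgepath_factor hne hdet hpf h
      (by simpa using hδ α hαW))
  have hδapp : ∀ α ∈ W, ∀ φ, α ++ φ ∈ W → EdgePath B.E (δ α) φ (δ (α ++ φ)) :=
    fun α hα φ h => edgepath_factor hne hdet hpf (hδ α hα) (hδ _ h)
  have hWapp : ∀ α ∈ W, ∀ φ, (α ++ φ ∈ W ↔ ∃ w, EdgePath B.E (δ α) φ w) := by
    intro α hα φ
    constructor
    · intro h; exact ⟨δ (α ++ φ), hδapp α hα φ h⟩
    · rintro ⟨w, hw⟩
      exact (hWiff _).mpr ⟨w, EdgePath.append' (hδ α hα) hw⟩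
  have hIword : ∀ α ∈ W, B.Iword α = {δ α} := by
    intro α hα
    ext u
    simp only [GNFA.Iword, Set.mem_setOf_eq, Set.mem_singleton_iff]
    exact ⟨fun h => huniq α u h, fun h => h ▸ hδ α hα⟩
  have hEq : ∀ α ∈ W, ∀ β ∈ W, (B.equivA α β ↔ δ α = δ β) := by
    intro α hα β hβ
    constructor
    · intro h
      have h0 := (h []).2 (by rw [List.append_nil, hWB]; exact hα)
      simp only [List.append_nil] at h0
      have h1 : B.Iword α = B.Iword β := h0
      rw [hIword α hα, hIword β hβ] at h1
      exact Set.singleton_eq_singleton_iff.mp h1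
    · intro h φ
      have hiff : α ++ φ ∈ W ↔ β ++ φ ∈ W := by
        rw [hWapp α hα φ, hWapp β hβ φ, h]
      constructor
      · rw [hWB]; exact hiff
      · intro hαφ'
        have hαφ : α ++ φ ∈ W := by rwa [hWB] at hαφ'
        have hβφ : β ++ φ ∈ W := hiff.mp hαφ
        show B.Iword (α ++ φ) = B.Iword (β ++ φ)
        rw [hIword _ hαφ, hIword _ hβφ]
        have h1 := hδapp α hα φ hαφ
        rw [h] at h1
        have hp : EdgePath B.E B.init (β ++ φ) (δ (α ++ φ)) :=
          EdgePath.append' (hδ β hβ) h1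
        rw [huniq _ _ hp]
  have hrefl : ∀ β, B.equivA β β := fun β φ => ⟨Iff.rfl, fun _ => rfl⟩
  have hclass : ∀ α ∈ W, ∀ β ∈ W,
      (eqClass W B.equivA α = eqClass W B.equivA β ↔ δ α = δ β) := by
    intro α hα β hβ
    constructor
    · intro h
      have hβmem : β ∈ eqClass W B.equivA α := h ▸ (⟨hβ, hrefl β⟩ : β ∈ W ∧ B.equivA β β)
      exact (hEq α hα β hβ).mp hβmem.2
    · intro h
      ext γ
      simp only [eqClass, Set.mem_setOf_eq]
      constructor
      · rintro ⟨hγ, hαγ⟩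
        exact ⟨hγ, (hEq β hβ γ hγ).mpr (h ▸ (hEq α hα γ hγ).mp hαγ)⟩
      · rintro ⟨hγ, hβγ⟩
        exact ⟨hγ, (hEq α hα γ hγ).mpr (h.trans ((hEq β hβ γ hγ).mp hβγ))⟩
  -- representatives of classes
  have hrep : ∀ u : {s : Set (List A) // ∃ α ∈ W, s = eqClass W B.equivA α},
      ∃ α, α ∈ W ∧ u.val = eqClass W B.equivA α := by
    intro u; obtain ⟨α, hα, h⟩ := u.2; exact ⟨α, hα, h⟩
  set rep : {s : Set (List A) // ∃ α ∈ W, s = eqClass W B.equivA α} → List A :=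
    fun u => (hrep u).choose with hrepdef
  have hrepW : ∀ u, rep u ∈ W := fun u => (hrep u).choose_spec.1
  have hrepc : ∀ u, u.val = eqClass W B.equivA (rep u) := fun u => (hrep u).choose_spec.2
  set f : {s : Set (List A) // ∃ α ∈ W, s = eqClass W B.equivA α} → QB :=
    fun u => δ (rep u) with hfdef
  have hfval : ∀ u α, α ∈ W → u.val = eqClass W B.equivA α → f u = δ α := by
    intro u α hα h
    exact (hclass (rep u) (hrepW u) α hα).mp ((hrepc u).symm.trans h)
  have hsur : ∀ q : QB, ∃ α, α ∈ W ∧ δ α = q := by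
    intro q
    obtain ⟨α, hα⟩ := B.reach q
    exact ⟨α, (hWiff α).mpr ⟨q, hα⟩, (huniq α q hα).symm⟩
  set ga : QB → List A := fun q => (hsur q).choose with hgadef
  have hgaW : ∀ q, ga q ∈ W := fun q => (hsur q).choose_spec.1
  have hgaδ : ∀ q, δ (ga q) = q := fun q => (hsur q).choose_spec.2
  set g : QB → {s : Set (List A) // ∃ α ∈ W, s = eqClass W B.equivA α} :=
    fun q => ⟨eqClass W B.equivA (ga q), ⟨ga q, hgaW q, rfl⟩⟩ with hgdef
  have hgf : ∀ u, g (f u) = u := by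
    intro u
    apply Subtype.ext
    show eqClass W B.equivA (ga (f u)) = u.val
    rw [hrepc u]
    exact (hclass _ (hgaW _) _ (hrepW u)).mpr (hgaδ (f u))
  have hfg : ∀ q, f (g q) = q := by
    intro q
    rw [hfval (g q) (ga q) (hgaW q) rfl, hgaδ]
  refine ⟨⟨f, g, hgf, hfg⟩, ?_, ?_, ?_⟩
  · show f M.init = B.init
    rw [hfval M.init [] hε hinit]
    exact (huniq [] B.init (EdgePath.refl B.init)).symm
  · intro u
    show u ∈ M.final ↔ f u ∈ B.final
    rw [hF]
    constructor
    · rintro ⟨α, hαL, hu⟩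
      have hαW := hLsub hαL
      rw [hfval u α hαW hu]
      have hαLang : α ∈ B.Lang := by rw [hLB']; exact hαL
      obtain ⟨w, hwF, hwp⟩ := hαLang
      rwa [huniq α w hwp] at hwF
    · intro h
      refine ⟨rep u, ?_, hrepc u⟩
      rw [← hLB']
      exact ⟨f u, h, hδ (rep u) (hrepW u)⟩
  · intro u v ρ
    show (u, v, ρ) ∈ M.E ↔ (f u, f v, ρ) ∈ B.E
    rw [hE]
    constructor
    · rintro ⟨α, hαW, hk, hu, hv⟩
      simp only [pfKernel, Tset, Set.mem_setOf_eq] at hk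
      obtain ⟨⟨hρne, hαρW⟩, hmin⟩ := hk
      have hp := hδapp α hαW ρ hαρW
      obtain ⟨v', σ, rest, e2, p2, heq⟩ := edgepath_cons hp hρne
      have hσρ : σ = ρ := by
        by_contra hne'
        refine hmin σ ⟨rest, heq⟩ hne' ?_
        refine ⟨hne _ _ _ e2, ?_⟩
        exact (hWiff _).mpr ⟨v', EdgePath.append' (hδ α hαW)
          (by simpa using EdgePath.step e2 (EdgePath.refl v'))⟩
      rw [hσρ] at heq
      have hrest : rest = [] :=
        List.append_cancel_left (heq.trans (List.append_nil ρ).symm)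
      subst hrest
      have hv' : v' = δ (α ++ ρ) := edgepath_nil hne p2
      subst hv'
      rw [hfval u α hαW hu, hfval v (α ++ ρ) hαρW hv]
      exact hσρ ▸ e2
    · intro hedge
      have hαW := hrepW u
      have hρne : ρ ≠ [] := hne _ _ _ hedge
      have hstep : EdgePath B.E (δ (rep u)) ρ (f v) := by
        simpa using EdgePath.step hedge (EdgePath.refl (f v))
      have hpath : EdgePath B.E B.init (rep u ++ ρ) (f v) :=
        EdgePath.append' (hδ (rep u) hαW) hstep
      have hαρW : rep u ++ ρ ∈ W := (hWiff _).mpr ⟨f v, hpath⟩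
      have hδαρ : f v = δ (rep u ++ ρ) := huniq _ _ hpath
      refine ⟨rep u, hαW, ?_, hrepc u, ?_⟩
      · simp only [pfKernel, Tset, Set.mem_setOf_eq]
        refine ⟨⟨hρne, hαρW⟩, ?_⟩
        rintro β hβpre hβne ⟨hβne', hαβW⟩
        have hpβ := hδapp (rep u) hαW β hαβW
        obtain ⟨v'', σ, rest, e2, p2, heq⟩ := edgepath_cons hpβ hβne'
        have hσβ : σ <+: β := ⟨rest, heq⟩
        have hσρ : σ = ρ := hpf _ _ _ _ _ e2 hedge (hσβ.trans hβpre)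
        have h1 : ρ.length ≤ β.length := hσρ ▸ hσβ.length_le
        have h2 : β.length ≤ ρ.length := hβpre.length_le
        exact hβne (List.IsPrefix.eq_of_length hβpre (le_antisymm h2 h1))
      · rw [hrepc v]
        exact (hclass _ (hrepW v) _ hαρW).mpr hδαρ
end

section
/- Let A = (Q, E, s, F) be a GDFA and let α ∈ W(A). Identifying, for β ∈ W(A), I_β with its unique element, we have K(T_α) = {ρ ∈ Σ⁺ : αρ ∈ W(A) and (I_α, I_{αρ}, ρ) ∈ E}, where T_α = {ρ ∈ Σ⁺ : αρ ∈ W(A)}. -/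
theorem GNFA.nil_path_aux' {A Q : Type} {E : Set (Q × Q × List A)}
    (hε : ∀ u v ρ, (u, v, ρ) ∈ E → ρ ≠ []) {u v : Q} {γ : List A}
    (h : EdgePath E u γ v) (hγ : γ = []) : u = v := by
  cases h with
  | refl => rfl
  | step he hp => exact absurd (List.append_eq_nil_iff.mp hγ).1 (hε _ _ _ he)

theorem GNFA.nil_path_aux {A Q : Type} {E : Set (Q × Q × List A)}
    (hε : ∀ u v ρ, (u, v, ρ) ∈ E → ρ ≠ []) {u v : Q}
    (h : EdgePath E u [] v) : u = v := GNFA.nil_path_aux' hε h rfl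

theorem GNFA.path_append_aux {A Q : Type} {E : Set (Q × Q × List A)} :
    ∀ {a : Q} {γ : List A} {b : Q}, EdgePath E a γ b →
    ∀ {δ : List A} {c : Q}, EdgePath E b δ c → EdgePath E a (γ ++ δ) c := by
  intro a γ b h
  induction h with
  | refl => intro δ c h2; simpa using h2
  | step he hp ih =>
    intro δ c h2
    rw [List.append_assoc]
    exact EdgePath.step he (ih h2)

theorem GNFA.det_path_aux {A Q : Type} {E : Set (Q × Q × List A)}
    (hε : ∀ u v ρ, (u, v, ρ) ∈ E → ρ ≠ [])
    (huni : ∀ u v v' ρ, (u, v, ρ) ∈ E → (u, v', ρ) ∈ E → v = v')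
    (hpf : ∀ u v v' ρ ρ', (u, v, ρ) ∈ E → (u, v', ρ') ∈ E → ρ <+: ρ' → ρ = ρ') :
    ∀ {u γ w}, EdgePath E u γ w → ∀ {γ' w'}, EdgePath E u γ' w' → γ <+: γ' →
      ∃ δ, γ' = γ ++ δ ∧ EdgePath E w δ w' := by
  intro u γ w h
  induction h with
  | refl u => exact fun h' _ => ⟨_, rfl, h'⟩
  | @step u v w ρ β he hp ih =>
    intro γ' w' h' hpre
    cases h' with
    | refl =>
      exact absurd (List.append_eq_nil_iff.mp (List.prefix_nil.mp hpre)).1 (hε _ _ _ he)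
    | @step _ v₂ _ ρ₂ β₂ he2 hp2 =>
      have h1 : ρ <+: ρ₂ ++ β₂ := (List.prefix_append ρ β).trans hpre
      have h2 : ρ₂ <+: ρ₂ ++ β₂ := List.prefix_append ρ₂ β₂
      have hρ : ρ = ρ₂ := by
        rcases List.prefix_or_prefix_of_prefix h1 h2 with h | h
        · exact hpf _ _ _ _ _ he he2 h
        · exact (hpf _ _ _ _ _ he2 he h).symm
      subst hρ
      have hv : v = v₂ := huni _ _ _ _ he he2
      subst hv
      have hβ : β <+: β₂ := (List.prefix_append_right_inj ρ).mp hpre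
      obtain ⟨δ, hδ, hpath⟩ := ih hp2 hβ
      exact ⟨δ, by rw [hδ, List.append_assoc], hpath⟩

/-- In a GDFA, for `α ∈ W(A)`, the prefix-free kernel of `T_α` consists exactly of the
nonempty strings `ρ` with `αρ ∈ W(A)` such that the (unique) state reached by `α` has
an edge labeled `ρ` to the (unique) state reached by `αρ`. -/
theorem GDFA_kernel_characterization {A Q : Type} [Fintype A] (M : GNFA A Q)
    (hD : M.IsGDFA) (α : List A) (hα : α ∈ M.WSet) :
    pfKernel (Tset M.WSet α) =
      {ρ : List A | ρ ≠ [] ∧ α ++ ρ ∈ M.WSet ∧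
        ∃ u ∈ M.Iword α, ∃ v ∈ M.Iword (α ++ ρ), (u, v, ρ) ∈ M.E} := by
  obtain ⟨hε, huni, hpf⟩ := hD
  obtain ⟨u, hu⟩ := hα
  ext ρ
  constructor
  · rintro ⟨⟨hρne, hρW⟩, hker⟩
    obtain ⟨v, hv⟩ := hρW
    obtain ⟨δ, hδ, hpath⟩ := GNFA.det_path_aux hε huni hpf hu hv
      (List.prefix_append α ρ)
    have hδρ : δ = ρ := (List.append_right_inj α).mp hδ.symm
    subst hδρ
    cases hpath with
    | refl => exact absurd rfl hρne
    | @step _ w _ ρ₁ β₁ he hp =>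
      have hαρ₁ : EdgePath M.E M.init (α ++ ρ₁) w := by
        have h2 : EdgePath M.E u (ρ₁ ++ []) w := EdgePath.step he (EdgePath.refl w)
        rw [List.append_nil] at h2
        exact GNFA.path_append_aux hu h2
      have hβnil : β₁ = [] := by
        by_contra hβ
        refine hker ρ₁ (List.prefix_append ρ₁ β₁) ?_ ⟨hε _ _ _ he, w, hαρ₁⟩
        intro hcon
        have hlen := congrArg List.length hcon
        simp only [List.length_append] at hlen
        exact hβ (List.eq_nil_of_length_eq_zero (by omega))
      subst hβnil
      have hw : w = v := GNFA.nil_path_aux hε hp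
      subst hw
      exact ⟨hρne, ⟨_, hv⟩, u, hu, _, hv, by simpa using he⟩
  · rintro ⟨hρne, hρW, u', hu', v, hv, he⟩
    refine ⟨⟨hρne, hρW⟩, ?_⟩
    rintro β hβpre hβne ⟨hβnil, x, hx⟩
    have huu' : u = u' := by
      obtain ⟨δ, hδ, hpath⟩ := GNFA.det_path_aux hε huni hpf hu hu'
        (List.prefix_refl α)
      have hδn : δ = [] := by simpa using hδ.symm
      subst hδn
      exact GNFA.nil_path_aux hε hpath
    subst huu'
    obtain ⟨δ, hδ, hpath⟩ := GNFA.det_path_aux hε huni hpf hu hx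
      (List.prefix_append α β)
    have hδβ : δ = β := (List.append_right_inj α).mp hδ.symm
    subst hδβ
    cases hpath with
    | refl => exact hβnil rfl
    | @step _ y _ ρ₂ β₂ he2 hp2 =>
      have h1 : ρ₂ <+: ρ := (List.prefix_append ρ₂ β₂).trans hβpre
      have hρρ : ρ₂ = ρ := hpf _ _ _ _ _ he2 he h1
      have hle := hβpre.length_le
      rw [← hρρ] at hle
      simp only [List.length_append] at hle
      have hβ₂ : β₂ = [] := List.eq_nil_of_length_eq_zero (by omega)
      subst hβ₂
      exact hβne (by simp [hρρ])
end

section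
/- Let A = (Q, E, s, F) be a GDFA. Then the equivalence relation ∼_A on W(A), defined by α ∼_A β iff I_α = I_β, is right-invariant; consequently ≡_A and ∼_A are the same equivalence relation. -/
private lemma prefix_comparable {A : Type} {ρ ρ' γ : List A}
    (h : ρ <+: γ) (h' : ρ' <+: γ) : ρ <+: ρ' ∨ ρ' <+: ρ := by
  rcases h with ⟨t, rfl⟩
  rcases h' with ⟨t', ht⟩
  induction ρ generalizing ρ' with
  | nil => exact Or.inl List.nil_prefix
  | cons a ρ ih =>
    cases ρ' with
    | nil => exact Or.inr List.nil_prefix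
    | cons b ρ' =>
      simp only [List.cons_append, List.cons.injEq] at ht
      rcases ht with ⟨rfl, ht⟩
      rcases ih ht with h | h
      · exact Or.inl (List.cons_prefix_cons.mpr ⟨rfl, h⟩)
      · exact Or.inr (List.cons_prefix_cons.mpr ⟨rfl, h⟩)

private lemma EdgePath.trans {A Q : Type} {E : Set (Q × Q × List A)} {q u w : Q}
    {α φ : List A} (h1 : EdgePath E q α u) (h2 : EdgePath E u φ w) :
    EdgePath E q (α ++ φ) w := by
  induction h1 with
  | refl => exact h2
  | step he _ ih => rw [List.append_assoc]; exact EdgePath.step he (ih h2)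

private lemma EdgePath.factor {A Q : Type} {M : GNFA A Q} (hD : M.IsGDFA)
    {q u w : Q} {α φ : List A} (h1 : EdgePath M.E q α u)
    (h2 : EdgePath M.E q (α ++ φ) w) : EdgePath M.E u φ w := by
  induction h1 with
  | refl => exact h2
  | @step q v _ ρ α he _ ih =>
    rw [List.append_assoc] at h2
    generalize hγ : ρ ++ (α ++ φ) = γ at h2
    cases h2 with
    | refl =>
      exact absurd (List.append_eq_nil_iff.mp hγ).1 (hD.1 _ _ _ he)
    | @step _ v' _ ρ' α' he' htail =>
      have hcmp : ρ <+: ρ' ∨ ρ' <+: ρ :=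
        prefix_comparable ⟨α ++ φ, hγ⟩ ⟨α', rfl⟩
      have hρ : ρ = ρ' := by
        rcases hcmp with h | h
        · exact hD.2.2 _ _ _ _ _ he he' h
        · exact (hD.2.2 _ _ _ _ _ he' he h).symm
      subst hρ
      have hv : v = v' := hD.2.1 _ _ _ _ he he'
      subst hv
      have : α ++ φ = α' := List.append_cancel_left hγ
      exact ih (this ▸ htail)

private lemma simA_ri {A Q : Type} (M : GNFA A Q) (hD : M.IsGDFA) :
    RightInvariant M.WSet M.simA := by
  intro α hα β hβ hsim φ
  obtain ⟨u, hu⟩ := hα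
  obtain ⟨v, hv⟩ := hβ
  have hIeq : ∀ w, w ∈ M.Iword (α ++ φ) ↔ w ∈ M.Iword (β ++ φ) := by
    intro w
    constructor
    · intro hw
      have hseg : EdgePath M.E u φ w := EdgePath.factor hD hu hw
      have hu' : EdgePath M.E M.init β u := by
        have : u ∈ M.Iword β := hsim ▸ hu
        exact this
      exact EdgePath.trans hu' hseg
    · intro hw
      have hseg : EdgePath M.E v φ w := EdgePath.factor hD hv hw
      have hv' : EdgePath M.E M.init α v := by
        have : v ∈ M.Iword α := hsim ▸ hv
        exact this
      exact EdgePath.trans hv' hseg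
  have hset : M.Iword (α ++ φ) = M.Iword (β ++ φ) := Set.ext hIeq
  constructor
  · constructor
    · rintro ⟨w, hw⟩; exact ⟨w, (hIeq w).mp hw⟩
    · rintro ⟨w, hw⟩; exact ⟨w, (hIeq w).mpr hw⟩
  · intro _; exact hset

/-- In a GDFA, `∼_A` is right-invariant; consequently `≡_A` and `∼_A` coincide
on `W(A)`. -/
theorem GDFA_simA_rightInvariant {A Q : Type} [Fintype A] (M : GNFA A Q)
    (hD : M.IsGDFA) :
    RightInvariant M.WSet M.simA ∧
    (∀ α ∈ M.WSet, ∀ β ∈ M.WSet, (M.equivA α β ↔ M.simA α β)) := by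
  refine ⟨simA_ri M hD, fun α hα β hβ => ⟨fun h => ?_, fun h φ => simA_ri M hD α hα β hβ h φ⟩⟩
  have := (h []).2 (by simpa using hα)
  simpa [GNFA.simA] using this
end

section
/- Let A = (Q, E, s, F) be a Wheeler GDFA and let α ∈ Σ*. Then: (1) G^≺(α) ∩ G_⊣(α) = ∅; (2) G_⊣(α) is ⪯_A-convex; (3) if u, v ∈ Q satisfy u ≺_A v and v ∈ G^≺(α), then u ∈ G^≺(α) (so G^≺(α) is a downward-closed initial segment of (Q, ⪯_A)); (4) if u, v ∈ Q satisfy u ≺_A v and v ∈ G^≺_⊣(α), then u ∈ G^≺_⊣(α) (so G^≺_⊣(α) is a downward-closed initial segment of (Q, ⪯_A)). -/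
section WheelerDefs
variable {A Q : Type} [LinearOrder A]

/-- Co-lexicographic strict order on strings: compare reverses lexicographically. -/
def colexLt (α β : List A) : Prop := List.Lex (· < ·) α.reverse β.reverse

/-- Co-lexicographic (reflexive) order on strings. -/
def colexLe (α β : List A) : Prop := colexLt α β ∨ α = β

namespace GNFA

/-- The relation `⪯_A` on states: reflexive, and for distinct `u, v`,
`u ≺_A v` iff every string of `I_u` is co-lexicographically smaller than
every string of `I_v`. -/
def ordA (M : GNFA A Q) (u v : Q) : Prop :=
  u = v ∨ ∀ α ∈ M.Istate u, ∀ β ∈ M.Istate v, colexLt α β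

/-- The strict relation `≺_A`. -/
def sordA (M : GNFA A Q) (u v : Q) : Prop := u ≠ v ∧ M.ordA u v

/-- A GDFA is Wheeler if `⪯_A` is a total order on states. -/
def Wheeler (M : GNFA A Q) : Prop :=
  (∀ u v, M.ordA u v → M.ordA v u → u = v) ∧
  (∀ u v w, M.ordA u v → M.ordA v w → M.ordA u w) ∧
  (∀ u v, M.ordA u v ∨ M.ordA v u)

/-- `G^≺(α)`: states reached only by strings co-lexicographically smaller than `α`. -/
def Gprec (M : GNFA A Q) (α : List A) : Set Q := {u | ∀ β ∈ M.Istate u, colexLt β α}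

/-- `G_⊣(α)`: states reached by some string suffixed by `α`. -/
def Gsuf (M : GNFA A Q) (α : List A) : Set Q := {u | ∃ β ∈ M.Istate u, α <:+ β}

/-- `G^≺_⊣(α) = G^≺(α) ∪ G_⊣(α)`. -/
def GprecSuf (M : GNFA A Q) (α : List A) : Set Q := M.Gprec α ∪ M.Gsuf α

/-- `G*(α)`: states reached by an edge whose label is suffixed by `α`. -/
def Gstar (M : GNFA A Q) (α : List A) : Set Q :=
  {v | ∃ v' ρ, (v', v, ρ) ∈ M.E ∧ α <:+ ρ}

/-- `λ(u)`: the set of nonempty strings labeling some edge entering `u`. -/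
def lam (M : GNFA A Q) (u : Q) : Set (List A) := {ρ | ρ ≠ [] ∧ ∃ u', (u', u, ρ) ∈ M.E}

/-- `out(U, ρ)`: the number of edges labeled `ρ` leaving states in `U`. -/
noncomputable def outCount (M : GNFA A Q) (U : Set Q) (ρ : List A) : ℕ :=
  {e ∈ M.E | e.1 ∈ U ∧ e.2.2 = ρ}.ncard

/-- `in(U, ρ)`: the number of edges labeled `ρ` entering states in `U`. -/
noncomputable def inCount (M : GNFA A Q) (U : Set Q) (ρ : List A) : ℕ :=
  {e ∈ M.E | e.2.1 ∈ U ∧ e.2.2 = ρ}.ncard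

end GNFA

/-- `seg q j = Q[1, j]`: the first `j` states in the enumeration `q` of the states. -/
def seg {Q : Type} {n : ℕ} (q : Fin n → Q) (j : ℕ) : Set Q :=
  {u | ∃ i : Fin n, (i : ℕ) < j ∧ q i = u}

end WheelerDefs

section helpers
variable {B : Type} [LinearOrder B]

lemma not_lex_append (p t : List B) : ¬ List.Lex (· < ·) (p ++ t) p := by
  induction p with
  | nil => intro h; cases h
  | cons a p ih =>
    intro h
    cases h with
    | cons h => exact ih h
    | rel h => exact lt_irrefl _ h

lemma lex_trans' : ∀ {x y z : List B}, List.Lex (· < ·) x y →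
    List.Lex (· < ·) y z → List.Lex (· < ·) x z := by
  intro x y z h1
  induction h1 generalizing z with
  | nil => intro h2; cases h2 with
    | rel _ => exact List.Lex.nil
    | cons _ => exact List.Lex.nil
  | @rel a l₁ b l₂ hab => intro h2; cases h2 with
    | rel hbc => exact List.Lex.rel (lt_trans hab hbc)
    | cons _ => exact List.Lex.rel hab
  | @cons a l₁ l₂ h1' ih => intro h2; cases h2 with
    | rel hbc => exact List.Lex.rel hbc
    | cons h2' => exact List.Lex.cons (ih h2')

lemma prefix_sandwich : ∀ (p x y z : List B), p <+: x → p <+: z →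
    List.Lex (· < ·) x y → List.Lex (· < ·) y z → p <+: y := by
  intro p
  induction p with
  | nil => intro _ y _ _ _ _ _; exact List.nil_prefix
  | cons a p ih =>
    rintro x y z ⟨t, rfl⟩ ⟨t', rfl⟩ h1 h2
    rw [List.cons_append] at h1 h2
    cases h1 with
    | rel hab =>
      cases h2 with
      | cons _ => exact absurd hab (lt_irrefl _)
      | rel hba => exact absurd (lt_trans hab hba) (lt_irrefl _)
    | cons h1' =>
      cases h2 with
      | rel hba => exact absurd hba (lt_irrefl _)
      | cons h2' =>
        obtain ⟨s, rfl⟩ := ih _ _ _ (List.prefix_append p t) (List.prefix_append p t') h1' h2'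
        exact ⟨s, rfl⟩

lemma lex_prefix_or : ∀ (p x z : List B), List.Lex (· < ·) x z → p <+: z →
    List.Lex (· < ·) x p ∨ p <+: x := by
  intro p
  induction p with
  | nil => intro x _ _ _; exact Or.inr List.nil_prefix
  | cons a p ih =>
    rintro x z h ⟨t, rfl⟩
    rw [List.cons_append] at h
    cases h with
    | nil => exact Or.inl List.Lex.nil
    | rel hba => exact Or.inl (List.Lex.rel hba)
    | cons h' =>
      rcases ih _ _ h' (List.prefix_append p t) with h'' | ⟨s, rfl⟩
      · exact Or.inl (List.Lex.cons h'')
      · exact Or.inr ⟨s, rfl⟩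

end helpers

/-- For a Wheeler GDFA and `α ∈ Σ*`: (1) `G^≺(α)` and `G_⊣(α)` are disjoint;
(2) `G_⊣(α)` is `⪯_A`-convex; (3) `G^≺(α)` is downward closed w.r.t. `≺_A`;
(4) `G^≺_⊣(α)` is downward closed w.r.t. `≺_A`. -/
theorem wheeler_G_sets {A Q : Type} [Fintype A] [LinearOrder A]
    (M : GNFA A Q) (hD : M.IsGDFA) (hW : M.Wheeler) (α : List A) :
    (M.Gprec α ∩ M.Gsuf α = ∅) ∧
    (∀ u v z : Q, M.ordA u v → M.ordA v z → u ∈ M.Gsuf α → z ∈ M.Gsuf α →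
      v ∈ M.Gsuf α) ∧
    (∀ u v : Q, M.sordA u v → v ∈ M.Gprec α → u ∈ M.Gprec α) ∧
    (∀ u v : Q, M.sordA u v → v ∈ M.GprecSuf α → u ∈ M.GprecSuf α) := by
  have part3 : ∀ u v : Q, M.sordA u v → v ∈ M.Gprec α → u ∈ M.Gprec α := by
    rintro u v ⟨hne, hord⟩ hv β hβ
    rcases hord with rfl | h
    · exact absurd rfl hne
    obtain ⟨γ, hγ⟩ := M.reach v
    exact lex_trans' (h β hβ γ hγ) (hv γ hγ)
  refine ⟨?_, ?_, part3, ?_⟩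
  · ext u
    simp only [Set.mem_inter_iff, Set.mem_empty_iff_false, iff_false]
    rintro ⟨hp, β, hβ, hs⟩
    have hlt := hp β hβ
    obtain ⟨t, ht⟩ := List.reverse_prefix.mpr hs
    unfold colexLt at hlt
    rw [← ht] at hlt
    exact not_lex_append _ _ hlt
  · rintro u v z huv hvz ⟨βu, hβu, hsu⟩ ⟨βz, hβz, hsz⟩
    rcases huv with rfl | h1
    · exact ⟨βu, hβu, hsu⟩
    rcases hvz with rfl | h2
    · exact ⟨βz, hβz, hsz⟩
    obtain ⟨βv, hβv⟩ := M.reach v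
    refine ⟨βv, hβv, List.reverse_prefix.mp ?_⟩
    exact prefix_sandwich _ _ _ _ (List.reverse_prefix.mpr hsu)
      (List.reverse_prefix.mpr hsz) (h1 βu hβu βv hβv) (h2 βv hβv βz hβz)
  · rintro u v hsv (hp | ⟨γ, hγ, hsg⟩)
    · exact Or.inl (part3 u v hsv hp)
    obtain ⟨hne, hord⟩ := hsv
    rcases hord with rfl | h
    · exact absurd rfl hne
    by_cases hc : ∃ β ∈ M.Istate u, α <:+ β
    · exact Or.inr hc
    push_neg at hc
    refine Or.inl fun β hβ => ?_
    rcases lex_prefix_or α.reverse β.reverse γ.reverse (h β hβ γ hγ)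
        (List.reverse_prefix.mpr hsg) with h'' | hpre
    · exact h''
    · exact absurd (List.reverse_prefix.mp hpre) (hc β hβ)
end

section
/- Let A₁ and A₂ be Wheeler r-GDFAs over the same finite linearly ordered alphabet Σ, both with n states. If BWT(A₁) = BWT(A₂), that is, for every 1 ≤ i ≤ r the strings OUT_i, IN_i, LAB_i of A₁ equal the corresponding strings of A₂, and the strings FIN of A₁ and A₂ are equal, then A₁ and A₂ are isomorphic. -/
/-!
Order the edges of `E(i)` colexicographically by label and then by the Wheeler rank of their
source. In a Wheeler GDFA their targets then have non-decreasing ranks: edges `(u, v, ρ)` and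
`(u', v', ρ')` in this order give strings `βρ ≺ β'ρ'` reaching `v` and `v'` (labels of equal
length decide the colex order of `βρ` and `β'ρ'`), so `v' ≺ v` is impossible. `OUT_i` and
`LAB_i` determine the ordered list of (source, label) pairs, `IN_i` determines how many of
them go to each target, and a monotone map on a finite chain is determined by its fibre sizes.
So the two automata have the same edges on ranks; the initial state has the least rank in both
since `ε` is colex-minimal, and `FIN` matches the final states.
-/

theorem eqOn_of_monotoneOn_of_ncard_fiber_eq {α β : Type*} [LinearOrder α] [LinearOrder β]
    {s : Set α} (hs : s.Finite) {f g : α → β} (hf : MonotoneOn f s) (hg : MonotoneOn g s)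
    (h : ∀ y, {x ∈ s | f x = y}.ncard = {x ∈ s | g x = y}.ncard) : s.EqOn f g := by
  classical
  lift s to Finset α using hs
  have hsorted : ∀ φ : α → β, MonotoneOn φ s → ((s.sort (· ≤ ·)).map φ).Pairwise (· ≤ ·) :=
    fun φ hφ => List.pairwise_map.2 <| (s.pairwise_sort (· ≤ ·)).imp_of_mem
      fun ha hb hab => hφ (Finset.mem_sort _ |>.1 ha) (Finset.mem_sort _ |>.1 hb) hab
  have hperm : ((s.sort (· ≤ ·)).map f).Perm ((s.sort (· ≤ ·)).map g) := by
    rw [← Multiset.coe_eq_coe, ← Multiset.map_coe, ← Multiset.map_coe, Finset.sort_eq]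
    ext y
    have hcard : ∀ φ : α → β, {x ∈ (s : Set α) | φ x = y}.ncard = (s.filter (y = φ ·)).card :=
      fun φ => by rw [← Set.ncard_coe_finset]; simp [eq_comm]
    rw [Multiset.count_map, Multiset.count_map, ← Finset.filter_val, ← Finset.filter_val,
      Finset.card_val, Finset.card_val, ← hcard, ← hcard, h]
  intro x hx
  exact List.map_inj_left.1 (hperm.eq_of_pairwise' (hsorted f hf) (hsorted g hg)) x
    ((Finset.mem_sort _).2 hx)

theorem List.Lex.append_of_length_eq {α : Type*} {r : α → α → Prop} {x y : List α}
    (h : List.Lex r x y) (hl : x.length = y.length) (a b : List α) :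
    List.Lex r (x ++ a) (y ++ b) := by
  induction h with
  | nil => simp at hl
  | cons _ ih => exact .cons (ih (by simpa using hl))
  | rel hab => exact .rel hab

section Colex

variable {A : Type} [LinearOrder A] {α β : List A}

theorem colexLt_asymm (h : colexLt α β) : ¬ colexLt β α :=
  List.lt_asymm (α := A) h

theorem not_colexLt_nil (α : List A) : ¬ colexLt α [] :=
  List.not_lex_nil

theorem colexLt.append_right (h : colexLt α β) (ρ : List A) : colexLt (α ++ ρ) (β ++ ρ) := by
  unfold colexLt at *
  simpa only [List.reverse_append] using List.Lex.append_left _ h ρ.reverse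

theorem colexLt.append_left_of_length_eq {ρ ρ' : List A} (h : colexLt ρ ρ')
    (hl : ρ.length = ρ'.length) (β β' : List A) : colexLt (β ++ ρ) (β' ++ ρ') := by
  unfold colexLt at *
  simpa only [List.reverse_append] using h.append_of_length_eq (by simpa using hl) _ _

end Colex

theorem EdgePath.snoc {A Q : Type} {E : Set (Q × Q × List A)} {s u v : Q} {β ρ : List A}
    (h : EdgePath E s β u) (he : (u, v, ρ) ∈ E) : EdgePath E s (β ++ ρ) v := by
  induction h with
  | refl w => simpa using EdgePath.step he (.refl v)
  | step h₁ _ ih => simpa only [List.append_assoc] using EdgePath.step h₁ (ih he)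

namespace GNFA

variable {A Q : Type} (M : GNFA A Q)

open Classical in
/-- The transition function of a GDFA; junk value `M.init` where no edge labeled `ρ`
leaves `u`. -/
noncomputable def target (u : Q) (ρ : List A) : Q :=
  if h : ∃ v, (u, v, ρ) ∈ M.E then h.choose else M.init

theorem target_eq {M : GNFA A Q} (hD : M.IsGDFA) {u v : Q} {ρ : List A} (he : (u, v, ρ) ∈ M.E) :
    M.target u ρ = v := by
  have h : ∃ v, (u, v, ρ) ∈ M.E := ⟨v, he⟩
  rw [target, dif_pos h]
  exact hD.2.1 _ _ _ _ h.choose_spec he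

theorem isomorphic_of_equiv_fin {Q' : Type} {M' : GNFA A Q'} {n : ℕ} (σ : Fin n ≃ Q)
    (σ' : Fin n ≃ Q') (hinit : σ.symm M.init = σ'.symm M'.init)
    (hfinal : ∀ l, σ l ∈ M.final ↔ σ' l ∈ M'.final)
    (hE : ∀ l m ρ, (σ l, σ m, ρ) ∈ M.E ↔ (σ' l, σ' m, ρ) ∈ M'.E) : M.Isomorphic M' := by
  refine ⟨σ.symm.trans σ', ?_, fun u => ?_, fun u v ρ => ?_⟩
  · simp [hinit]
  · simpa using hfinal (σ.symm u)
  · simpa using hE (σ.symm u) (σ.symm v) ρ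

variable {n : ℕ} (σ : Fin n ≃ Q)

/-- The pairs (label, source rank) of the edges of `E(i)`, keyed by the reversed label so that
the lexicographic order on keys is colex order on labels, then rank order on sources. -/
def outKeys (i : ℕ) : Set (List A ×ₗ Fin n) :=
  {k | (ofLex k).1.length = i ∧ ∃ v, (σ (ofLex k).2, v, (ofLex k).1.reverse) ∈ M.E}

noncomputable def keyTarget (k : List A ×ₗ Fin n) : Fin n :=
  σ.symm (M.target (σ (ofLex k).2) (ofLex k).1.reverse)

theorem outKeys_finite (i : ℕ) : (M.outKeys σ i).Finite := by
  refine (M.finE.image fun e => toLex (e.2.2.reverse, σ.symm e.1)).subset ?_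
  rintro k ⟨-, v, hv⟩
  exact ⟨_, hv, by simp⟩

theorem keyTarget_eq {M : GNFA A Q} (hD : M.IsGDFA) {k : List A ×ₗ Fin n} {v : Q}
    (hv : (σ (ofLex k).2, v, (ofLex k).1.reverse) ∈ M.E) : M.keyTarget σ k = σ.symm v := by
  rw [keyTarget, target_eq hD hv]

theorem ncard_keyTarget_fiber (hD : M.IsGDFA) (i : ℕ) (y : Fin n) :
    {k ∈ M.outKeys σ i | M.keyTarget σ k = y}.ncard =
      {e ∈ M.E | e.2.1 = σ y ∧ e.2.2.length = i}.ncard := by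
  have hinj : Set.InjOn (fun e : Q × Q × List A => toLex (e.2.2.reverse, σ.symm e.1)) M.E := by
    rintro ⟨u, v, ρ⟩ he ⟨u', v', ρ'⟩ he' h
    simp only [Prod.mk.injEq, List.reverse_inj, EmbeddingLike.apply_eq_iff_eq] at h
    obtain ⟨rfl, rfl⟩ := h
    rw [hD.2.1 _ _ _ _ he he']
  rw [← (hinj.mono (Set.sep_subset _ _)).ncard_image]
  congr 1
  ext k
  constructor
  · rintro ⟨⟨hk, v, hv⟩, hy⟩
    rw [keyTarget_eq σ hD hv] at hy
    exact ⟨(σ (ofLex k).2, v, (ofLex k).1.reverse), ⟨hv, by simp [← hy], by simpa using hk⟩,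
      by simp⟩
  · rintro ⟨⟨u, v, ρ⟩, ⟨he, rfl, rfl⟩, rfl⟩
    refine ⟨⟨by simp, _, by simpa using he⟩, ?_⟩
    simp [keyTarget_eq σ hD (k := toLex (ρ.reverse, σ.symm u)) (by simpa using he)]

variable [LinearOrder A]

theorem colexLt_of_sordA {u v : Q} (h : M.sordA u v) {α β : List A} (hα : α ∈ M.Istate u)
    (hβ : β ∈ M.Istate v) : colexLt α β :=
  h.2.resolve_left h.1 α hα β hβ

theorem not_sordA_init (u : Q) : ¬ M.sordA u M.init := fun h =>
  have ⟨α, hα⟩ := M.reach u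
  not_colexLt_nil α (M.colexLt_of_sordA h hα (.refl _))

theorem not_sordA_of_edges {u u' v v' : Q} {ρ ρ' : List A} (he : (u, v, ρ) ∈ M.E)
    (he' : (u', v', ρ') ∈ M.E)
    (h : ∀ β ∈ M.Istate u, ∀ β' ∈ M.Istate u', colexLt (β ++ ρ) (β' ++ ρ')) :
    ¬ M.sordA v' v := fun hv =>
  have ⟨β, hβ⟩ := M.reach u
  have ⟨β', hβ'⟩ := M.reach u'
  colexLt_asymm (h β hβ β' hβ') (M.colexLt_of_sordA hv (hβ'.snoc he') (hβ.snoc he))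


theorem monotoneOn_keyTarget (hD : M.IsGDFA)
    (hmono : ∀ i j : Fin n, i < j → M.sordA (σ i) (σ j)) (i : ℕ) :
    MonotoneOn (M.keyTarget σ) (M.outKeys σ i) := by
  rintro k ⟨hk, v, hv⟩ k' ⟨hk', v', hv'⟩ hle
  rcases hle.eq_or_lt with rfl | hlt_key
  · exact le_rfl
  rw [keyTarget_eq σ hD hv, keyTarget_eq σ hD hv']
  by_contra hlt
  refine M.not_sordA_of_edges hv hv' (fun β hβ β' hβ' => ?_)
    (by simpa using hmono _ _ (not_le.1 hlt))
  rcases Prod.Lex.lt_iff.1 hlt_key with hlabel | ⟨hlabel, hsource⟩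
  · refine colexLt.append_left_of_length_eq ?_ (by simp [hk, hk']) β β'
    rw [colexLt, List.reverse_reverse, List.reverse_reverse]
    exact hlabel
  · rw [hlabel]
    exact (M.colexLt_of_sordA (hmono _ _ hsource) hβ hβ').append_right _

theorem mem_E_of_outKeys_eq_of_ncard_in_eq {Q' : Type} {M' : GNFA A Q'} (σ' : Fin n ≃ Q')
    (hD : M.IsGDFA) (hD' : M'.IsGDFA) (hmono : ∀ i j : Fin n, i < j → M.sordA (σ i) (σ j))
    (hmono' : ∀ i j : Fin n, i < j → M'.sordA (σ' i) (σ' j)) {i : ℕ}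
    (hkeys : M.outKeys σ i = M'.outKeys σ' i)
    (hin : ∀ y, {e ∈ M.E | e.2.1 = σ y ∧ e.2.2.length = i}.ncard =
      {e ∈ M'.E | e.2.1 = σ' y ∧ e.2.2.length = i}.ncard)
    {l m : Fin n} {ρ : List A} (hρ : ρ.length = i) (he : (σ l, σ m, ρ) ∈ M.E) :
    (σ' l, σ' m, ρ) ∈ M'.E := by
  have heq : (M.outKeys σ i).EqOn (M.keyTarget σ) (M'.keyTarget σ') :=
    eqOn_of_monotoneOn_of_ncard_fiber_eq (M.outKeys_finite σ i)
      (M.monotoneOn_keyTarget σ hD hmono i) (hkeys ▸ M'.monotoneOn_keyTarget σ' hD' hmono' i)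
      fun y => by rw [M.ncard_keyTarget_fiber σ hD, hkeys, M'.ncard_keyTarget_fiber σ' hD', hin]
  have hk : toLex (ρ.reverse, l) ∈ M.outKeys σ i := ⟨by simpa using hρ, _, by simpa using he⟩
  obtain ⟨-, v, hv⟩ := hkeys ▸ hk
  have hm : M'.keyTarget σ' (toLex (ρ.reverse, l)) = m := by
    rw [← heq hk, keyTarget_eq σ hD (v := σ m) (by simpa using he), Equiv.symm_apply_apply]
  rw [keyTarget_eq σ' hD' hv] at hm
  simpa [← hm] using hv

theorem symm_init_le (hmono : ∀ i j : Fin n, i < j → M.sordA (σ i) (σ j)) (j : Fin n) :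
    σ.symm M.init ≤ j :=
  not_lt.1 fun h => M.not_sordA_init (σ j) (by simpa using hmono j _ h)

end GNFA

/-- Equality of the BWT components is encoded as follows. For a GDFA, distinct edges
leaving a state have distinct labels, so for each `1 ≤ i ≤ r` the pair of strings
`(OUT_i, LAB_i)` (outdegrees in unary; labels of the edges of `E(i)` sorted by start
state and then by label) carries exactly the following information: for each state
`Q[ℓ]` and each label `ρ` of length `i`, whether some edge labeled `ρ` leaves `Q[ℓ]`
(hypothesis `hOUTLAB`). The string `IN_i` (indegrees in unary) carries exactly the
`i`-indegree of each state `Q[ℓ]` (hypothesis `hIN`). The bit string `FIN` carries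
exactly finality of each `Q[ℓ]` (hypothesis `hFIN`). -/
theorem bwt_encodes_wheeler_GDFA_general {A Q₁ Q₂ : Type} [LinearOrder A]
    (r : ℕ) (M₁ : GNFA A Q₁) (M₂ : GNFA A Q₂)
    (hD₁ : M₁.IsGDFA) (hr₁ : ∀ e ∈ M₁.E, e.2.2.length ≤ r)
    (hD₂ : M₂.IsGDFA) (hr₂ : ∀ e ∈ M₂.E, e.2.2.length ≤ r)
    (n : ℕ) (q₁ : Fin n → Q₁) (hq₁ : Function.Bijective q₁)
    (hmono₁ : ∀ i j : Fin n, i < j → M₁.sordA (q₁ i) (q₁ j))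
    (q₂ : Fin n → Q₂) (hq₂ : Function.Bijective q₂)
    (hmono₂ : ∀ i j : Fin n, i < j → M₂.sordA (q₂ i) (q₂ j))
    (hOUTLAB : ∀ (l : Fin n) (ρ : List A), 1 ≤ ρ.length → ρ.length ≤ r →
      ((∃ v, (q₁ l, v, ρ) ∈ M₁.E) ↔ (∃ v, (q₂ l, v, ρ) ∈ M₂.E)))
    (hIN : ∀ (l : Fin n) (i : ℕ), 1 ≤ i → i ≤ r →
      {e ∈ M₁.E | e.2.1 = q₁ l ∧ e.2.2.length = i}.ncard =
        {e ∈ M₂.E | e.2.1 = q₂ l ∧ e.2.2.length = i}.ncard)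
    (hFIN : ∀ l : Fin n, q₁ l ∈ M₁.final ↔ q₂ l ∈ M₂.final) :
    M₁.Isomorphic M₂ := by
  let σ₁ := Equiv.ofBijective q₁ hq₁
  let σ₂ := Equiv.ofBijective q₂ hq₂
  have hkeys {i : ℕ} (h1 : 1 ≤ i) (hr : i ≤ r) : M₁.outKeys σ₁ i = M₂.outKeys σ₂ i := by
    ext k
    refine and_congr_right fun hk => hOUTLAB _ _ ?_ ?_ <;> simpa [hk]
  have hlen {Q : Type} {M : GNFA A Q} (hD : M.IsGDFA) (hr : ∀ e ∈ M.E, e.2.2.length ≤ r)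
      {u v : Q} {ρ : List A} (he : (u, v, ρ) ∈ M.E) : 1 ≤ ρ.length ∧ ρ.length ≤ r :=
    ⟨List.length_pos_iff.2 (hD.1 _ _ _ he), hr _ he⟩
  refine M₁.isomorphic_of_equiv_fin σ₁ σ₂
    (le_antisymm (M₁.symm_init_le σ₁ hmono₁ _) (M₂.symm_init_le σ₂ hmono₂ _)) hFIN
    fun l m ρ => ⟨fun he => ?_, fun he => ?_⟩
  · obtain ⟨h1, hr⟩ := hlen hD₁ hr₁ he
    exact M₁.mem_E_of_outKeys_eq_of_ncard_in_eq σ₁ σ₂ hD₁ hD₂ hmono₁ hmono₂ (hkeys h1 hr)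
      (hIN · _ h1 hr) rfl he
  · obtain ⟨h1, hr⟩ := hlen hD₂ hr₂ he
    exact M₂.mem_E_of_outKeys_eq_of_ncard_in_eq σ₂ σ₁ hD₂ hD₁ hmono₂ hmono₁ (hkeys h1 hr).symm
      (fun y => (hIN y _ h1 hr).symm) rfl he

/-- **The BWT of a Wheeler GDFA is a valid encoding**: if two Wheeler `r`-GDFAs with
`n` states (enumerated in `⪯_A`-order by `q₁`, `q₂`) have the same Burrows–Wheeler
Transform, then they are isomorphic.

Equality of the BWT components is encoded as follows. For a GDFA, distinct edges
leaving a state have distinct labels, so for each `1 ≤ i ≤ r` the pair of strings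
`(OUT_i, LAB_i)` (outdegrees in unary; labels of the edges of `E(i)` sorted by start
state and then by label) carries exactly the following information: for each state
`Q[ℓ]` and each label `ρ` of length `i`, whether some edge labeled `ρ` leaves `Q[ℓ]`
(hypothesis `hOUTLAB`). The string `IN_i` (indegrees in unary) carries exactly the
`i`-indegree of each state `Q[ℓ]` (hypothesis `hIN`). The bit string `FIN` carries
exactly finality of each `Q[ℓ]` (hypothesis `hFIN`). -/
theorem bwt_encodes_wheeler_GDFA {A Q₁ Q₂ : Type} [Fintype A] [LinearOrder A]
    (r : ℕ) (M₁ : GNFA A Q₁) (M₂ : GNFA A Q₂)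
    (hD₁ : M₁.IsGDFA) (hr₁ : ∀ e ∈ M₁.E, e.2.2.length ≤ r) (hW₁ : M₁.Wheeler)
    (hD₂ : M₂.IsGDFA) (hr₂ : ∀ e ∈ M₂.E, e.2.2.length ≤ r) (hW₂ : M₂.Wheeler)
    (n : ℕ) (q₁ : Fin n → Q₁) (hq₁ : Function.Bijective q₁)
    (hmono₁ : ∀ i j : Fin n, i < j → M₁.sordA (q₁ i) (q₁ j))
    (q₂ : Fin n → Q₂) (hq₂ : Function.Bijective q₂)
    (hmono₂ : ∀ i j : Fin n, i < j → M₂.sordA (q₂ i) (q₂ j))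
    (hOUTLAB : ∀ (l : Fin n) (ρ : List A), 1 ≤ ρ.length → ρ.length ≤ r →
      ((∃ v, (q₁ l, v, ρ) ∈ M₁.E) ↔ (∃ v, (q₂ l, v, ρ) ∈ M₂.E)))
    (hIN : ∀ (l : Fin n) (i : ℕ), 1 ≤ i → i ≤ r →
      {e ∈ M₁.E | e.2.1 = q₁ l ∧ e.2.2.length = i}.ncard =
        {e ∈ M₂.E | e.2.1 = q₂ l ∧ e.2.2.length = i}.ncard)
    (hFIN : ∀ l : Fin n, q₁ l ∈ M₁.final ↔ q₂ l ∈ M₂.final) :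
    M₁.Isomorphic M₂ :=
  bwt_encodes_wheeler_GDFA_general r M₁ M₂ hD₁ hr₁ hD₂ hr₂ n q₁ hq₁ hmono₁ q₂ hq₂ hmono₂ hOUTLAB hIN
    hFIN
end
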